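/- arXiv:math/0603518 — 5 statements merged into one kernel-verified Lean document; each statement's English description precedes it below -/
import Mathlib

section
/- Let G be a finite abelian group and let ρ, σ be irreducible complex characters of G (extended linearly to C[G]). Then ρ and σ agree on the module W(G) spanned by the simple quantities of generator-sets of cyclic subgroups of G if and only if ker(ρ) = ker(σ). -/
open MonoidAlgebra

/-- The linear extension of a character `χ : G →* ℂ` to the group algebra `ℂ[G]`. -/
noncomputable def charExt {G : Type*} [CommGroup G] (χ : G →* ℂ) :
    MonoidAlgebra ℂ G → ℂ :=
  fun x => x.coeff.sum fun g c => c * χ g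

/-- The module `W(G)`: the `ℂ`-span of the simple quantities of the generator sets of
the cyclic subgroups of `G`. -/
noncomputable def Wmod (G : Type*) [CommGroup G] [Fintype G] :
    Submodule ℂ (MonoidAlgebra ℂ G) :=
  Submodule.span ℂ (Set.range fun H : {H : Subgroup G // IsCyclic H} =>
    ∑ᶠ g ∈ {g : G | Subgroup.zpowers g = H.1}, MonoidAlgebra.single g (1 : ℂ))

/-!
Grouping the elements of a subgroup `H` by the cyclic subgroup they generate gives
`∑_{h ∈ H} f h = ∑_{D ≤ H cyclic} ∑_{g generates D} f g`; inverting this over the well-founded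
lattice of subgroups, the generator sums of a function vanish iff all its subgroup sums do.
Apply this to `f = ρ - σ`: by orthogonality `∑_{h ∈ H} χ h` is `|H|` or `0` according as
`H ≤ ker χ` or not, so the subgroup sums of `ρ` and `σ` agree iff their kernels contain the same
subgroups, i.e. iff the kernels coincide.
-/

open Finset Subgroup

section Generators

open scoped Classical

variable {G : Type*} [Group G] [Fintype G]

noncomputable def generators (H : Subgroup G) : Finset G := {g | zpowers g = H}

@[simp]
lemma mem_generators {H : Subgroup G} {g : G} : g ∈ generators H ↔ zpowers g = H := by
  simp [generators]

lemma generators_eq_empty_of_not_isCyclic {H : Subgroup G} (hH : ¬IsCyclic H) :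
    generators H = ∅ :=
  eq_empty_of_forall_notMem fun g hg =>
    hH (H.isCyclic_iff_exists_zpowers_eq_top.mpr ⟨g, mem_generators.mp hg⟩)

lemma sum_subgroup_eq_sum_sum_generators {M : Type*} [AddCommMonoid M] (F : G → M)
    (H : Subgroup G) :
    ∑ h : H, F h = ∑ D ∈ ({h | h ∈ H} : Finset G).image zpowers, ∑ g ∈ generators D, F g := by
  rw [← sum_subtype _ (fun _ => mem_filter_univ _),
    ← sum_fiberwise_of_maps_to (fun h hh => mem_image_of_mem zpowers hh)]
  refine sum_congr rfl fun D hD => ?_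
  obtain ⟨g, hg, rfl⟩ := mem_image.mp hD
  congr 1
  ext h
  simp only [mem_filter, mem_univ, true_and, mem_generators, and_iff_right_iff_imp] at hg ⊢
  exact fun hgh => zpowers_le.mpr hg (hgh ▸ mem_zpowers h)

lemma forall_sum_generators_eq_zero_iff {M : Type*} [AddCommMonoid M] (F : G → M) :
    (∀ H : Subgroup G, ∑ g ∈ generators H, F g = 0) ↔ ∀ H : Subgroup G, ∑ h : H, F h = 0 := by
  refine ⟨fun hgen H => ?_, fun hsub H => ?_⟩
  · rw [sum_subgroup_eq_sum_sum_generators]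
    exact sum_eq_zero fun D _ => hgen D
  induction H using WellFoundedLT.induction with
  | ind H ih =>
    by_cases hcyc : IsCyclic H
    swap
    · rw [generators_eq_empty_of_not_isCyclic hcyc, sum_empty]
    obtain ⟨g, rfl⟩ := H.isCyclic_iff_exists_zpowers_eq_top.mp hcyc
    rw [← hsub, sum_subgroup_eq_sum_sum_generators,
      sum_eq_single_of_mem _ (mem_image_of_mem zpowers
      ((mem_filter_univ g).mpr (mem_zpowers g))) fun D hD hne => ih D ?_]
    obtain ⟨h, hh, rfl⟩ := mem_image.mp hD
    exact lt_of_le_of_ne (zpowers_le.mpr (by simpa using hh)) hne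

end Generators

section Characters

open scoped Classical

variable {G R : Type*} [Group G] [Fintype G] [CommRing R] [IsDomain R]

lemma sum_subgroup_apply_eq_ite (χ : G →* R) (H : Subgroup G) :
    ∑ h : H, χ h = if H ≤ χ.ker then (Nat.card H : R) else 0 := by
  split_ifs with hH
  · simp [MonoidHom.mem_ker.mp (hH _), Nat.card_eq_fintype_card]
  · refine sum_hom_units_eq_zero (χ.comp H.subtype) fun h1 => hH fun g hg => ?_
    simpa using DFunLike.congr_fun h1 ⟨g, hg⟩

lemma ker_eq_ker_iff_forall_sum_subgroup_eq [CharZero R] (ρ σ : G →* R) :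
    ρ.ker = σ.ker ↔ ∀ H : Subgroup G, ∑ h : H, ρ h = ∑ h : H, σ h := by
  refine ⟨fun hker H => by simp only [sum_subgroup_apply_eq_ite, hker], fun hsum => ?_⟩
  refine eq_of_forall_le_iff fun H => ?_
  have hcard : (Nat.card H : R) ≠ 0 := Nat.cast_ne_zero.mpr Nat.card_pos.ne'
  have := hsum H
  rw [sum_subgroup_apply_eq_ite, sum_subgroup_apply_eq_ite] at this
  split_ifs at this <;> simp_all

end Characters

section GroupAlgebra

variable {G : Type*} [CommGroup G]

lemma charExt_eq_lift (χ : G →* ℂ) : charExt χ = ⇑(MonoidAlgebra.lift ℂ ℂ G χ) := rfl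

variable [Fintype G]

lemma charExt_finsum_single_generators (χ : G →* ℂ) (H : Subgroup G) :
    charExt χ (∑ᶠ g ∈ {g : G | zpowers g = H}, MonoidAlgebra.single g (1 : ℂ)) =
      ∑ g ∈ generators H, χ g := by
  have hgen : {g : G | zpowers g = H} = ↑(generators H) := by ext; simp
  rw [hgen, finsum_mem_coe_finset, charExt_eq_lift, map_sum]
  simp

lemma forall_charExt_Wmod_eq_iff (ρ σ : G →* ℂ) :
    (∀ w ∈ Wmod G, charExt ρ w = charExt σ w) ↔
      ∀ H : Subgroup G, ∑ g ∈ generators H, ρ g = ∑ g ∈ generators H, σ g := by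
  change Set.EqOn (MonoidAlgebra.lift ℂ ℂ G ρ).toLinearMap (MonoidAlgebra.lift ℂ ℂ G σ).toLinearMap
    (Wmod G) ↔ _
  rw [Wmod, LinearMap.eqOn_span_iff]
  simp only [Set.EqOn, Set.forall_mem_range, Subtype.forall, AlgHom.toLinearMap_apply,
    ← charExt_eq_lift, charExt_finsum_single_generators]
  refine ⟨fun h H => ?_, fun h H _ => h H⟩
  by_cases hH : IsCyclic H
  · exact h H hH
  · simp only [generators_eq_empty_of_not_isCyclic hH, sum_empty]

end GroupAlgebra

/-- two irreducible characters of a finite abelian group agree on `W(G)`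
iff they have the same kernel. -/
theorem stmt_3 {G : Type*} [CommGroup G] [Fintype G] (ρ σ : G →* ℂ) :
    (∀ w ∈ Wmod G, charExt ρ w = charExt σ w) ↔
      {g : G | ρ g = 1} = {g : G | σ g = 1} := by
  have hker : ({g : G | ρ g = 1} = {g : G | σ g = 1}) ↔ ρ.ker = σ.ker :=
    SetLike.coe_set_eq (p := ρ.ker) (q := σ.ker)
  have hsub := forall_sum_generators_eq_zero_iff (⇑ρ - ⇑σ)
  simp only [Pi.sub_apply, sum_sub_distrib, sub_eq_zero] at hsub
  rw [forall_charExt_Wmod_eq_iff, hker, ker_eq_ker_iff_forall_sum_subgroup_eq, hsub]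
end

section
/- Let p be a prime, n ≥ 1, and G = Z_{p^n} ⊕ Z_{p^n}. The cyclic subgroups of G are exactly the trivial subgroup together with the subgroups ⟨(p^m, a p^m)⟩ for 0 ≤ m ≤ n-1 and 0 ≤ a ≤ p^{n-m} - 1, and the subgroups ⟨(b p^{m+1}, p^m)⟩ for 0 ≤ m ≤ n-1 and 0 ≤ b ≤ p^{n-m-1} - 1; moreover all these subgroups are pairwise distinct. -/
/-!
Every nonzero element of `ZMod (p ^ n)` is `pᵏ u` with `u` a unit and `k < n`, and scaling a
generator by a unit does not change the cyclic subgroup it generates. So for nonzero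
`x = (pᵏ u, pˡ u')` one divides by the unit on the coordinate of smaller valuation, getting
`(pᵏ, pᵏ c)` if `k ≤ l` and `(p^{l+1} c, pˡ)` if `l < k`; and `pᵐ c` only depends on `c` modulo
`p^{n-m}`.

For distinctness, two generators of one cyclic subgroup are multiples of each other, and
`pᵐ = r pᵏ` in `ZMod (p ^ n)` with `m < n` forces `k ≤ m` (reduce modulo `p^{m+1}`). This pins
down `m` and separates the two families; then `r pᵐ = pᵐ` gives `a pᵐ = a' pᵐ`.
-/

section
variable (p n : ℕ)

/-- The subgroup `⟨(pᵐ, a·pᵐ)⟩` of `ℤ_{pⁿ} ⊕ ℤ_{pⁿ}`. -/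
def fam₁ (m a : ℕ) : AddSubgroup (ZMod (p ^ n) × ZMod (p ^ n)) :=
  AddSubgroup.zmultiples (((p ^ m : ℕ) : ZMod (p ^ n)), ((a * p ^ m : ℕ) : ZMod (p ^ n)))

/-- The subgroup `⟨(b·p^{m+1}, pᵐ)⟩` of `ℤ_{pⁿ} ⊕ ℤ_{pⁿ}`. -/
def fam₂ (m b : ℕ) : AddSubgroup (ZMod (p ^ n) × ZMod (p ^ n)) :=
  AddSubgroup.zmultiples (((b * p ^ (m + 1) : ℕ) : ZMod (p ^ n)), ((p ^ m : ℕ) : ZMod (p ^ n)))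

end

open AddSubgroup

namespace ZMod

section Module

variable {N : ℕ} {M : Type*} [AddCommGroup M] [Module (ZMod N) M]

theorem mem_zmultiples_iff_exists_smul {x y : M} :
    y ∈ zmultiples x ↔ ∃ r : ZMod N, r • x = y := by
  refine ⟨fun ⟨k, hk⟩ => ⟨k, by rw [Int.cast_smul_eq_zsmul]; exact hk⟩, ?_⟩
  rintro ⟨r, rfl⟩
  exact smul_mem (mem_zmultiples x) r

theorem zmultiples_units_smul (u : (ZMod N)ˣ) (x : M) :
    zmultiples ((u : ZMod N) • x) = zmultiples x := by
  refine le_antisymm (zmultiples_le_of_mem (smul_mem (mem_zmultiples x) _)) ?_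
  refine zmultiples_le_of_mem ?_
  simpa [smul_smul] using
    smul_mem (mem_zmultiples ((u : ZMod N) • x)) ((u⁻¹ : (ZMod N)ˣ) : ZMod N)

end Module

theorem mem_zmultiples_prod_iff {N : ℕ} {u v u' v' : ZMod N} :
    (u', v') ∈ zmultiples (u, v) ↔ ∃ r : ZMod N, r * u = u' ∧ r * v = v' := by
  rw [mem_zmultiples_iff_exists_smul (N := N)]
  simp only [Prod.smul_mk, smul_eq_mul, Prod.mk.injEq]

variable {p n m : ℕ}

theorem pow_ne_zero_of_lt (hp : 1 < p) (hm : m < n) : (p : ZMod (p ^ n)) ^ m ≠ 0 := by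
  rw [← Nat.cast_pow, Ne, natCast_eq_zero_iff, Nat.pow_dvd_pow_iff_le_right hp]
  omega

theorem le_of_pow_eq_mul_pow (hp : 1 < p) (hm : m < n) {k : ℕ} {r : ZMod (p ^ n)}
    (h : (p : ZMod (p ^ n)) ^ m = r * p ^ k) : k ≤ m := by
  by_contra! hmk
  have hdvd : p ^ (m + 1) ∣ p ^ n := pow_dvd_pow p hm
  have hk : (p : ZMod (p ^ (m + 1))) ^ k = 0 := by
    rw [← Nat.cast_pow, natCast_eq_zero_iff]
    exact pow_dvd_pow p hmk
  have hcast := congrArg (castHom hdvd (ZMod (p ^ (m + 1)))) h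
  rw [map_pow, map_mul, map_pow, map_natCast, hk, mul_zero] at hcast
  exact pow_ne_zero_of_lt hp m.lt_succ_self hcast

theorem eq_of_natCast_mul_pow_eq (hp : 0 < p) (hm : m ≤ n) {a a' : ℕ}
    (ha : a < p ^ (n - m)) (ha' : a' < p ^ (n - m))
    (h : (a : ZMod (p ^ n)) * p ^ m = a' * p ^ m) : a = a' := by
  have hpn : p ^ n = p ^ (n - m) * p ^ m := by rw [← pow_add, Nat.sub_add_cancel hm]
  simp only [← Nat.cast_pow, ← Nat.cast_mul, natCast_eq_natCast_iff'] at h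
  rw [hpn, Nat.mul_mod_mul_right, Nat.mul_mod_mul_right, Nat.mod_eq_of_lt ha,
    Nat.mod_eq_of_lt ha'] at h
  exact Nat.eq_of_mul_eq_mul_right (pow_pos hp m) h

theorem natCast_val_mod_mul_pow (hp : 0 < p) (hm : m ≤ n) (c : ZMod (p ^ n)) :
    ((c.val % p ^ (n - m) : ℕ) : ZMod (p ^ n)) * p ^ m = p ^ m * c := by
  have : NeZero (p ^ n) := ⟨pow_ne_zero n hp.ne'⟩
  have hmod := (Nat.mod_modEq c.val (p ^ (n - m))).mul_right' (p ^ m)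
  rw [← pow_add, Nat.sub_add_cancel hm] at hmod
  conv_rhs => rw [← natCast_zmod_val c, mul_comm]
  exact_mod_cast (natCast_eq_natCast_iff _ _ _).2 hmod

theorem exists_eq_pow_mul_unit (hp : p.Prime) {y : ZMod (p ^ n)} (hy : y ≠ 0) :
    ∃ k < n, ∃ u : (ZMod (p ^ n))ˣ, y = p ^ k * u := by
  have : NeZero (p ^ n) := ⟨pow_ne_zero n hp.ne_zero⟩
  obtain ⟨k, w, hw, hyw⟩ :=
    Nat.exists_eq_pow_mul_and_not_dvd ((val_ne_zero y).2 hy) p hp.ne_one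
  have hw_unit : IsUnit (w : ZMod (p ^ n)) :=
    (isUnit_iff_coprime w (p ^ n)).2 (((hp.coprime_iff_not_dvd).2 hw).symm.pow_right n)
  have hy_eq : y = p ^ k * w := by rw [← natCast_zmod_val y, hyw]; push_cast; rfl
  refine ⟨k, ?_, hw_unit.unit, hy_eq⟩
  by_contra! hnk
  apply hy
  rw [hy_eq, ← Nat.cast_pow, (natCast_eq_zero_iff _ _).2 (pow_dvd_pow p hnk), zero_mul]

end ZMod

open ZMod

section

variable {p n : ℕ}

theorem fam₁_eq_zmultiples (m a : ℕ) :
    fam₁ p n m a = zmultiples ((p : ZMod (p ^ n)) ^ m, (a : ZMod (p ^ n)) * p ^ m) := by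
  simp [fam₁]

theorem fam₂_eq_zmultiples (m b : ℕ) :
    fam₂ p n m b = zmultiples ((b : ZMod (p ^ n)) * p ^ (m + 1), (p : ZMod (p ^ n)) ^ m) := by
  simp [fam₂]

theorem exists_zmultiples_eq_fam₁ (hp : 0 < p) {m : ℕ} (hm : m < n) (u : (ZMod (p ^ n))ˣ)
    (c : ZMod (p ^ n)) :
    ∃ a < p ^ (n - m),
      zmultiples ((p : ZMod (p ^ n)) ^ m * u, (p : ZMod (p ^ n)) ^ m * c) = fam₁ p n m a := by
  refine ⟨(↑u⁻¹ * c : ZMod (p ^ n)).val % p ^ (n - m), Nat.mod_lt _ (pow_pos hp _), ?_⟩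
  rw [fam₁_eq_zmultiples, natCast_val_mod_mul_pow hp hm.le]
  conv_rhs => rw [← zmultiples_units_smul u]
  congr 1
  ext
  · simp [mul_comm]
  · simp [mul_left_comm (u : ZMod (p ^ n)) ((p : ZMod (p ^ n)) ^ m)]

theorem exists_zmultiples_eq_fam₂ (hp : 0 < p) {m : ℕ} (hm : m < n) (u : (ZMod (p ^ n))ˣ)
    (c : ZMod (p ^ n)) :
    ∃ b < p ^ (n - m - 1),
      zmultiples ((p : ZMod (p ^ n)) ^ (m + 1) * c, (p : ZMod (p ^ n)) ^ m * u) =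
        fam₂ p n m b := by
  refine ⟨(↑u⁻¹ * c : ZMod (p ^ n)).val % p ^ (n - (m + 1)), Nat.mod_lt _ (pow_pos hp _), ?_⟩
  rw [fam₂_eq_zmultiples, natCast_val_mod_mul_pow hp hm]
  conv_rhs => rw [← zmultiples_units_smul u]
  congr 1
  ext
  · simp [mul_left_comm (u : ZMod (p ^ n)) ((p : ZMod (p ^ n)) ^ (m + 1))]
  · simp [mul_comm]

theorem exists_pair_eq_pow_mul_unit (hp : p.Prime) {u v : ZMod (p ^ n)} (h : (u, v) ≠ 0) :
    ∃ k < n, ∃ (w : (ZMod (p ^ n))ˣ) (c : ZMod (p ^ n)),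
      (u = p ^ k * w ∧ v = p ^ k * c) ∨ (u = p ^ (k + 1) * c ∧ v = p ^ k * w) := by
  by_cases hv : v = 0
  · have hu : u ≠ 0 := fun hu => h (by rw [hu, hv]; rfl)
    obtain ⟨k, hk, w, rfl⟩ := exists_eq_pow_mul_unit hp hu
    exact ⟨k, hk, w, 0, .inl ⟨rfl, by rw [hv, mul_zero]⟩⟩
  obtain ⟨l, hl, w', rfl⟩ := exists_eq_pow_mul_unit hp hv
  by_cases hu : u = 0
  · exact ⟨l, hl, w', 0, .inr ⟨by rw [hu, mul_zero], rfl⟩⟩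
  obtain ⟨k, hk, w, rfl⟩ := exists_eq_pow_mul_unit hp hu
  rcases le_or_gt k l with hkl | hlk
  · refine ⟨k, hk, w, p ^ (l - k) * w', .inl ⟨rfl, ?_⟩⟩
    rw [← mul_assoc, ← pow_add, Nat.add_sub_cancel' hkl]
  · refine ⟨l, hl, w', p ^ (k - (l + 1)) * w, .inr ⟨?_, rfl⟩⟩
    rw [← mul_assoc, ← pow_add, Nat.add_sub_cancel' hlk]

theorem zmultiples_eq_fam_of_ne_zero (hp : p.Prime) {x : ZMod (p ^ n) × ZMod (p ^ n)}
    (hx : x ≠ 0) :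
    (∃ m a, m ≤ n - 1 ∧ a ≤ p ^ (n - m) - 1 ∧ zmultiples x = fam₁ p n m a) ∨
    (∃ m b, m ≤ n - 1 ∧ b ≤ p ^ (n - m - 1) - 1 ∧ zmultiples x = fam₂ p n m b) := by
  obtain ⟨k, hk, w, c, ⟨hu, hv⟩ | ⟨hu, hv⟩⟩ := exists_pair_eq_pow_mul_unit hp hx
  · obtain ⟨a, ha, h⟩ := exists_zmultiples_eq_fam₁ hp.pos hk w c
    exact .inl ⟨k, a, by omega, by omega, by rw [← h, ← hu, ← hv]⟩
  · obtain ⟨b, hb, h⟩ := exists_zmultiples_eq_fam₂ hp.pos hk w c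
    exact .inr ⟨k, b, by omega, by omega, by rw [← h, ← hu, ← hv]⟩

theorem fam₁_ne_bot (hp : 1 < p) {m : ℕ} (hm : m < n) (a : ℕ) : fam₁ p n m a ≠ ⊥ := by
  rw [fam₁_eq_zmultiples, Ne, zmultiples_eq_bot, Prod.ext_iff]
  exact fun h => pow_ne_zero_of_lt hp hm h.1

theorem fam₂_ne_bot (hp : 1 < p) {m : ℕ} (hm : m < n) (b : ℕ) : fam₂ p n m b ≠ ⊥ := by
  rw [fam₂_eq_zmultiples, Ne, zmultiples_eq_bot, Prod.ext_iff]
  exact fun h => pow_ne_zero_of_lt hp hm h.2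

theorem fam₁_inj (hp : 1 < p) {m a m' a' : ℕ} (hm : m < n) (ha : a < p ^ (n - m))
    (hm' : m' < n) (ha' : a' < p ^ (n - m')) (h : fam₁ p n m a = fam₁ p n m' a') :
    m = m' ∧ a = a' := by
  rw [fam₁_eq_zmultiples, fam₁_eq_zmultiples] at h
  obtain ⟨r, hr₁, hr₂⟩ := mem_zmultiples_prod_iff.1 (zmultiples_le.1 h.le)
  obtain ⟨s, hs₁, -⟩ := mem_zmultiples_prod_iff.1 (zmultiples_le.1 h.ge)
  obtain rfl : m = m' :=
    le_antisymm (le_of_pow_eq_mul_pow hp hm' hs₁.symm) (le_of_pow_eq_mul_pow hp hm hr₁.symm)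
  refine ⟨rfl, eq_of_natCast_mul_pow_eq (by omega) hm.le ha ha' ?_⟩
  calc (a : ZMod (p ^ n)) * p ^ m = r * (a' * p ^ m) := hr₂.symm
    _ = a' * (r * p ^ m) := by ring
    _ = a' * p ^ m := by rw [hr₁]

theorem fam₂_inj (hp : 1 < p) {m b m' b' : ℕ} (hm : m < n) (hb : b < p ^ (n - m - 1))
    (hm' : m' < n) (hb' : b' < p ^ (n - m' - 1)) (h : fam₂ p n m b = fam₂ p n m' b') :
    m = m' ∧ b = b' := by
  rw [fam₂_eq_zmultiples, fam₂_eq_zmultiples] at h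
  obtain ⟨r, hr₁, hr₂⟩ := mem_zmultiples_prod_iff.1 (zmultiples_le.1 h.le)
  obtain ⟨s, -, hs₂⟩ := mem_zmultiples_prod_iff.1 (zmultiples_le.1 h.ge)
  obtain rfl : m = m' :=
    le_antisymm (le_of_pow_eq_mul_pow hp hm' hs₂.symm) (le_of_pow_eq_mul_pow hp hm hr₂.symm)
  rw [Nat.sub_sub] at hb hb'
  refine ⟨rfl, eq_of_natCast_mul_pow_eq (by omega) hm hb hb' ?_⟩
  calc (b : ZMod (p ^ n)) * p ^ (m + 1) = r * (b' * p ^ (m + 1)) := hr₁.symm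
    _ = b' * p * (r * p ^ m) := by ring
    _ = b' * p ^ (m + 1) := by rw [hr₂]; ring

theorem fam₁_ne_fam₂ (hp : 1 < p) {m m' : ℕ} (hm : m < n) (hm' : m' < n) (a b : ℕ) :
    fam₁ p n m a ≠ fam₂ p n m' b := by
  rw [fam₁_eq_zmultiples, fam₂_eq_zmultiples]
  intro h
  obtain ⟨r, hr₁, -⟩ := mem_zmultiples_prod_iff.1 (zmultiples_le.1 h.le)
  obtain ⟨s, -, hs₂⟩ := mem_zmultiples_prod_iff.1 (zmultiples_le.1 h.ge)
  have hlt : m' + 1 ≤ m :=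
    le_of_pow_eq_mul_pow hp hm (k := m' + 1) (r := r * b) (by rw [← hr₁]; ring)
  have hle : m ≤ m' := le_of_pow_eq_mul_pow hp hm' (r := s * a) (by rw [← hs₂]; ring)
  omega

end

/-- the cyclic subgroups of `ℤ_{pⁿ} ⊕ ℤ_{pⁿ}` are exactly the trivial
subgroup together with the `⟨(pᵐ, a pᵐ)⟩` (`0 ≤ m ≤ n-1`, `0 ≤ a ≤ p^{n-m}-1`) and the
`⟨(b p^{m+1}, pᵐ)⟩` (`0 ≤ m ≤ n-1`, `0 ≤ b ≤ p^{n-m-1}-1`); moreover all the listed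
subgroups are pairwise distinct. -/
theorem stmt_6 (p : ℕ) (hp : p.Prime) (n : ℕ) (hn : 1 ≤ n) :
    (∀ H : AddSubgroup (ZMod (p ^ n) × ZMod (p ^ n)),
      (∃ x, H = AddSubgroup.zmultiples x) ↔
        (H = ⊥ ∨
         (∃ m a, m ≤ n - 1 ∧ a ≤ p ^ (n - m) - 1 ∧ H = fam₁ p n m a) ∨
         (∃ m b, m ≤ n - 1 ∧ b ≤ p ^ (n - m - 1) - 1 ∧ H = fam₂ p n m b))) ∧
    (∀ m a m' a', m ≤ n - 1 → a ≤ p ^ (n - m) - 1 → m' ≤ n - 1 → a' ≤ p ^ (n - m') - 1 →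
      fam₁ p n m a = fam₁ p n m' a' → m = m' ∧ a = a') ∧
    (∀ m b m' b', m ≤ n - 1 → b ≤ p ^ (n - m - 1) - 1 → m' ≤ n - 1 →
      b' ≤ p ^ (n - m' - 1) - 1 → fam₂ p n m b = fam₂ p n m' b' → m = m' ∧ b = b') ∧
    (∀ m a m' b, m ≤ n - 1 → a ≤ p ^ (n - m) - 1 → m' ≤ n - 1 → b ≤ p ^ (n - m' - 1) - 1 →
      fam₁ p n m a ≠ fam₂ p n m' b) ∧
    (∀ m a, m ≤ n - 1 → a ≤ p ^ (n - m) - 1 → fam₁ p n m a ≠ ⊥) ∧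
    (∀ m b, m ≤ n - 1 → b ≤ p ^ (n - m - 1) - 1 → fam₂ p n m b ≠ ⊥) := by
  have lt_n {m : ℕ} (h : m ≤ n - 1) : m < n := by omega
  have lt_pow {a k : ℕ} (h : a ≤ p ^ k - 1) : a < p ^ k :=
    Nat.lt_of_le_sub_one (pow_pos hp.pos k) h
  refine ⟨fun H => ⟨?_, ?_⟩,
    fun _ _ _ _ hm ha hm' ha' => fam₁_inj hp.one_lt (lt_n hm) (lt_pow ha) (lt_n hm') (lt_pow ha'),
    fun _ _ _ _ hm hb hm' hb' => fam₂_inj hp.one_lt (lt_n hm) (lt_pow hb) (lt_n hm') (lt_pow hb'),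
    fun _ a _ b hm _ hm' _ => fam₁_ne_fam₂ hp.one_lt (lt_n hm) (lt_n hm') a b,
    fun _ a hm _ => fam₁_ne_bot hp.one_lt (lt_n hm) a,
    fun _ b hm _ => fam₂_ne_bot hp.one_lt (lt_n hm) b⟩
  · rintro ⟨x, rfl⟩
    by_cases hx : x = 0
    · exact .inl (zmultiples_eq_bot.2 hx)
    · exact .inr (zmultiples_eq_fam_of_ne_zero hp hx)
  · rintro (rfl | ⟨m, a, -, -, rfl⟩ | ⟨m, b, -, -, rfl⟩)
    exacts [⟨0, zmultiples_zero_eq_bot.symm⟩, ⟨_, rfl⟩, ⟨_, rfl⟩]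
end

section
/- Let p be a prime, n ≥ 1, and G = Z_{p^n} ⊕ Z_{p^n}. The number of cyclic subgroups of G of order exactly p^m is p^{m-1}(p+1) for each 1 ≤ m ≤ n. -/
open AddSubgroup

lemma zmod_torsion_card (p : ℕ) (hp : p.Prime) (n k : ℕ) (hk : k ≤ n) :
    Nat.card {x : ZMod (p ^ n) // p ^ k • x = 0} = p ^ k := by
  haveI : NeZero (p ^ n) := ⟨pow_ne_zero n hp.pos.ne'⟩
  classical
  apply le_antisymm
  · rw [Nat.card_eq_fintype_card, Fintype.card_subtype]
    have := IsAddCyclic.card_nsmul_eq_zero_le (α := ZMod (p ^ n)) (n := p ^ k)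
      (pow_pos hp.pos k)
    convert this using 2
  · set g : ZMod (p ^ n) := ((p ^ (n - k) : ℕ) : ZMod (p ^ n)) with hg
    have hcard : Nat.card (zmultiples g) = p ^ k := by
      rw [Nat.card_zmultiples, ZMod.addOrderOf_coe _ (NeZero.ne _),
        Nat.gcd_eq_right (pow_dvd_pow p (Nat.sub_le n k)),
        Nat.pow_div (Nat.sub_le n k) hp.pos, Nat.sub_sub_self hk]
    have hmem : ∀ x ∈ zmultiples g, p ^ k • x = 0 := by
      intro x hx
      obtain ⟨z, rfl⟩ := mem_zmultiples_iff.mp hx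
      have hgz : p ^ k • g = 0 := by
        rw [hg, nsmul_eq_mul, ← Nat.cast_mul, ← pow_add,
          Nat.add_sub_cancel' hk, ZMod.natCast_self]
      rw [smul_comm, hgz, smul_zero]
    calc p ^ k = Nat.card (zmultiples g) := hcard.symm
      _ ≤ Nat.card {x : ZMod (p ^ n) // p ^ k • x = 0} :=
        Nat.card_le_card_of_injective
          (fun y => ⟨y.1, hmem y.1 y.2⟩)
          (by intro a b hab; exact Subtype.ext (by simpa using congrArg Subtype.val hab))

lemma prod_torsion_card (p : ℕ) (hp : p.Prime) (n k : ℕ) (hk : k ≤ n) :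
    Nat.card {x : ZMod (p ^ n) × ZMod (p ^ n) // p ^ k • x = 0} = p ^ (2 * k) := by
  have e1 : {x : ZMod (p ^ n) × ZMod (p ^ n) // p ^ k • x = 0} ≃
      ({a : ZMod (p ^ n) // p ^ k • a = 0} × {b : ZMod (p ^ n) // p ^ k • b = 0}) :=
    (Equiv.subtypeEquivRight (fun x => by simp [Prod.ext_iff])).trans
      Equiv.subtypeProdEquivProd
  rw [Nat.card_congr e1, Nat.card_prod, zmod_torsion_card p hp n k hk, ← pow_add, two_mul]

lemma order_exact_card (p : ℕ) (hp : p.Prime) (n m : ℕ) (hm1 : 1 ≤ m) (hmn : m ≤ n) :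
    Nat.card {x : ZMod (p ^ n) × ZMod (p ^ n) // addOrderOf x = p ^ m} + p ^ (2 * (m - 1))
      = p ^ (2 * m) := by
  classical
  haveI : NeZero (p ^ n) := ⟨pow_ne_zero n hp.pos.ne'⟩
  rw [← prod_torsion_card p hp n m hmn,
    ← prod_torsion_card p hp n (m - 1) (le_trans (Nat.sub_le m 1) hmn)]
  have key : ∀ x : ZMod (p ^ n) × ZMod (p ^ n),
      p ^ m • x = 0 ↔ (addOrderOf x = p ^ m ∨ p ^ (m - 1) • x = 0) := by
    intro x
    rw [← addOrderOf_dvd_iff_nsmul_eq_zero, ← addOrderOf_dvd_iff_nsmul_eq_zero]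
    constructor
    · intro h
      obtain ⟨i, hi, he⟩ := (Nat.dvd_prime_pow hp).mp h
      rcases eq_or_lt_of_le hi with h' | h'
      · exact Or.inl (h' ▸ he)
      · exact Or.inr (he ▸ pow_dvd_pow p (by omega))
    · rintro (h | h)
      · exact h ▸ dvd_rfl
      · exact h.trans (pow_dvd_pow p (Nat.sub_le m 1))
  have hdisj : Disjoint (fun x : ZMod (p ^ n) × ZMod (p ^ n) => addOrderOf x = p ^ m)
      (fun x => p ^ (m - 1) • x = 0) := by
    rw [Pi.disjoint_iff]
    intro x
    rw [Prop.disjoint_iff]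
    rintro ⟨h1, h2⟩
    rw [← addOrderOf_dvd_iff_nsmul_eq_zero, h1,
      Nat.pow_dvd_pow_iff_le_right hp.one_lt] at h2
    omega
  rw [Nat.card_congr ((Equiv.subtypeEquivRight key).trans
    (subtypeOrEquiv _ _ hdisj)), Nat.card_sum]

lemma fiber_card (p : ℕ) (hp : p.Prime) (n m : ℕ)
    (H : AddSubgroup (ZMod (p ^ n) × ZMod (p ^ n))) (g : ZMod (p ^ n) × ZMod (p ^ n))
    (hHg : H = zmultiples g) (hcard : Nat.card H = p ^ m) :
    Nat.card {x : ZMod (p ^ n) × ZMod (p ^ n) // addOrderOf x = p ^ m ∧ zmultiples x = H}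
      = Nat.totient (p ^ m) := by
  classical
  haveI : NeZero (p ^ n) := ⟨pow_ne_zero n hp.pos.ne'⟩
  haveI : IsAddCyclic H := by
    subst hHg
    apply isAddCyclic_of_addOrderOf_eq_card (⟨g, mem_zmultiples g⟩ : zmultiples g)
    rw [AddSubgroup.addOrderOf_mk, ← Nat.card_zmultiples]
  have e : {x : ZMod (p ^ n) × ZMod (p ^ n) // addOrderOf x = p ^ m ∧ zmultiples x = H}
      ≃ {y : H // addOrderOf y = p ^ m} :=
    { toFun := fun ⟨x, hx1, hx2⟩ => ⟨⟨x, hx2 ▸ mem_zmultiples x⟩,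
        by rw [AddSubgroup.addOrderOf_mk]; exact hx1⟩
      invFun := fun y => ⟨y.1.1, by rw [AddSubgroup.addOrderOf_coe]; exact y.2, by
        apply AddSubgroup.eq_of_le_of_card_ge (zmultiples_le_of_mem y.1.2)
        rw [hcard, Nat.card_zmultiples, AddSubgroup.addOrderOf_coe, y.2]⟩
      left_inv := fun ⟨x, hx1, hx2⟩ => Subtype.ext rfl
      right_inv := fun ⟨⟨y, hy⟩, h2⟩ => Subtype.ext (Subtype.ext rfl) }
  rw [Nat.card_congr e]
  haveI : Fintype H := Fintype.ofFinite H
  rw [Nat.card_eq_fintype_card, Fintype.card_subtype]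
  have hd : p ^ m ∣ Fintype.card H := by
    rw [← Nat.card_eq_fintype_card, hcard]
  have := IsAddCyclic.card_addOrderOf_eq_totient (α := H) hd
  convert this using 2

/-- in `G = ℤ_{pⁿ} ⊕ ℤ_{pⁿ}`, the number of cyclic subgroups of order
exactly `pᵐ` is `p^{m-1}(p+1)`, for each `1 ≤ m ≤ n`. -/
theorem stmt_7 (p : ℕ) (hp : p.Prime) (n : ℕ) (hn : 1 ≤ n) (m : ℕ) (hm1 : 1 ≤ m)
    (hmn : m ≤ n) :
    Nat.card {H : AddSubgroup (ZMod (p ^ n) × ZMod (p ^ n)) //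
        (∃ x, H = AddSubgroup.zmultiples x) ∧ Nat.card H = p ^ m} =
      p ^ (m - 1) * (p + 1) := by
  classical
  haveI : NeZero (p ^ n) := ⟨pow_ne_zero n hp.pos.ne'⟩
  haveI : Finite (AddSubgroup (ZMod (p ^ n) × ZMod (p ^ n))) :=
    Finite.of_injective _ SetLike.coe_injective
  set T := {H : AddSubgroup (ZMod (p ^ n) × ZMod (p ^ n)) //
      (∃ x, H = AddSubgroup.zmultiples x) ∧ Nat.card H = p ^ m} with hT
  set X := {x : ZMod (p ^ n) × ZMod (p ^ n) // addOrderOf x = p ^ m} with hX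
  let f : X → T := fun x => ⟨zmultiples x.1, ⟨x.1, rfl⟩,
    by rw [Nat.card_zmultiples, x.2]⟩
  have hfiber : ∀ H : T, Nat.card {x : X // f x = H} = Nat.totient (p ^ m) := by
    intro H
    obtain ⟨g, hg⟩ := H.2.1
    have e : {x : X // f x = H} ≃
        {x : ZMod (p ^ n) × ZMod (p ^ n) // addOrderOf x = p ^ m ∧ zmultiples x = H.1} :=
      { toFun := fun x => ⟨x.1.1, x.1.2, congrArg Subtype.val x.2⟩
        invFun := fun z => ⟨⟨z.1, z.2.1⟩, Subtype.ext z.2.2⟩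
        left_inv := fun x => Subtype.ext (Subtype.ext rfl)
        right_inv := fun z => Subtype.ext rfl }
    rw [Nat.card_congr e, fiber_card p hp n m H.1 g hg H.2.2]
  have hXcard : Nat.card X = Nat.card T * Nat.totient (p ^ m) := by
    haveI : Fintype T := Fintype.ofFinite T
    haveI : Fintype X := Fintype.ofFinite X
    rw [Nat.card_congr (Equiv.sigmaFiberEquiv f).symm, Nat.card_eq_fintype_card,
      Fintype.card_sigma]
    rw [Finset.sum_congr rfl (fun H _ => by
      rw [← Nat.card_eq_fintype_card, hfiber H]), Finset.sum_const, smul_eq_mul,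
      Nat.card_eq_fintype_card, Fintype.card]
  have hkey := order_exact_card p hp n m hm1 hmn
  rw [hXcard] at hkey
  have hφ : Nat.totient (p ^ m) = p ^ (m - 1) * (p - 1) := Nat.totient_prime_pow hp hm1
  obtain ⟨j, rfl⟩ : ∃ j, m = j + 1 := ⟨m - 1, (Nat.succ_pred_eq_of_pos hm1).symm⟩
  obtain ⟨q, rfl⟩ : ∃ q, p = q + 1 := ⟨p - 1, (Nat.succ_pred_eq_of_pos hp.pos).symm⟩
  simp only [Nat.add_sub_cancel] at hφ ⊢
  rw [hφ] at hkey
  have hident : ((q + 1) ^ j * (q + 1 + 1)) * ((q + 1) ^ j * q) + (q + 1) ^ (2 * j)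
      = (q + 1) ^ (2 * (j + 1)) := by
    have h1 : (q + 1) ^ (2 * j) = (q + 1) ^ j * (q + 1) ^ j := by
      rw [two_mul, pow_add]
    have h2 : (q + 1) ^ (2 * (j + 1)) = (q + 1) ^ j * (q + 1) ^ j * ((q + 1) * (q + 1)) := by
      rw [show 2 * (j + 1) = j + j + 2 by ring, pow_add, pow_add, pow_two]
    rw [h1, h2]; ring
  rw [← hident] at hkey
  have := Nat.add_right_cancel hkey
  have hq : 0 < q := by have := hp.two_le; omega
  exact Nat.eq_of_mul_eq_mul_right (by positivity) this
end

section
/- Let p be a prime, n ≥ 1, G = Z_{p^n} ⊕ Z_{p^n}, F a cyclic subgroup of G, and H a cocyclic subgroup of G. Then F ⊆ H if and only if l(F) - l(F ∩ H^Δ) ≤ n - l(H^Δ), where l(K) denotes the integer i with |K| = p^i and H^Δ = p^m H for H ≅ Z_{p^n} ⊕ Z_{p^m}. -/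
section
variable (p n : ℕ)

/-- `l(K) = log_p |K|` for a `p`-subgroup `K`. -/
noncomputable def len (K : AddSubgroup (ZMod (p ^ n) × ZMod (p ^ n))) : ℕ :=
  (Nat.card K).factorization p

/-- The multiplication-by-`pᵏ` endomorphism. -/
def pPow (k : ℕ) : (ZMod (p ^ n) × ZMod (p ^ n)) →+ (ZMod (p ^ n) × ZMod (p ^ n)) :=
  AddMonoidHom.mk' (fun x => p ^ k • x) (fun a b => smul_add _ a b)

/-- For a cocyclic subgroup `H ≅ ℤ_{pⁿ} ⊕ ℤ_{pᵐ}` (so `|H| = p^{n+m}`),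
`H^Δ = pᵐ H`. -/
noncomputable def deltaMap (H : AddSubgroup (ZMod (p ^ n) × ZMod (p ^ n))) :
    AddSubgroup (ZMod (p ^ n) × ZMod (p ^ n)) :=
  H.map (pPow p n (len p n H - n))

end

variable {p n : ℕ}

lemma aux_cardG (hp : p.Prime) : Nat.card (ZMod (p^n) × ZMod (p^n)) = p^(2*n) := by
  haveI : NeZero (p^n) := ⟨pow_ne_zero n hp.ne_zero⟩
  rw [Nat.card_prod, Nat.card_zmod, ← pow_add, two_mul]

lemma aux_card_len (hp : p.Prime) (K : AddSubgroup (ZMod (p^n) × ZMod (p^n))) :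
    Nat.card K = p ^ len p n K ∧ len p n K ≤ 2*n := by
  haveI : NeZero (p^n) := ⟨pow_ne_zero n hp.ne_zero⟩
  have hdvd : Nat.card K ∣ p ^ (2*n) := by
    rw [← aux_cardG hp]; exact AddSubgroup.card_addSubgroup_dvd_card K
  obtain ⟨k, hk, hcard⟩ := (Nat.dvd_prime_pow hp).mp hdvd
  have hlen : len p n K = k := by
    unfold len; rw [hcard, hp.factorization_pow, Finsupp.single_eq_same]
  rw [hlen, hcard]; exact ⟨rfl, hk⟩

lemma aux_zmod_ker (hp : p.Prime) {m : ℕ} (hm : m ≤ n) (a : ZMod (p^n)) :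
    p^m • a = 0 ↔ ∃ b : ZMod (p^n), p^(n-m) * b = a := by
  haveI : NeZero (p^n) := ⟨pow_ne_zero n hp.ne_zero⟩
  have hval : ((a.val : ℕ) : ZMod (p^n)) = a := by
    simp [ZMod.natCast_val, ZMod.cast_id]
  constructor
  · intro h
    rw [nsmul_eq_mul] at h
    have h2 : ((p^m * a.val : ℕ) : ZMod (p^n)) = 0 := by
      rw [Nat.cast_mul, hval, h]
    rw [ZMod.natCast_eq_zero_iff] at h2
    have h3 : p^(n-m) ∣ a.val := by
      have : p^m * p^(n-m) ∣ p^m * a.val := by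
        rw [← pow_add, Nat.add_sub_cancel' hm]; exact h2
      exact (mul_dvd_mul_iff_left (pow_ne_zero m hp.ne_zero)).mp this
    obtain ⟨c, hc⟩ := h3
    refine ⟨(c : ZMod (p^n)), ?_⟩
    rw [← hval, hc, Nat.cast_mul, Nat.cast_pow]
  · rintro ⟨b, rfl⟩
    rw [nsmul_eq_mul, ← mul_assoc]
    norm_cast
    rw [← pow_add, Nat.add_sub_cancel' hm]
    simp

lemma aux_ker_eq (hp : p.Prime) {m : ℕ} (hm : m ≤ n) :
    (pPow p n m).ker = (AddSubgroup.zmultiples (((p^(n-m) : ℕ)) : ZMod (p^n))).prod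
      (AddSubgroup.zmultiples (((p^(n-m) : ℕ)) : ZMod (p^n))) := by
  haveI : NeZero (p^n) := ⟨pow_ne_zero n hp.ne_zero⟩
  have key : ∀ a : ZMod (p^n), p^m • a = 0 ↔
      a ∈ AddSubgroup.zmultiples (((p^(n-m) : ℕ)) : ZMod (p^n)) := by
    intro a
    rw [aux_zmod_ker hp hm]
    constructor
    · rintro ⟨b, rfl⟩
      obtain ⟨k, rfl⟩ := ZMod.intCast_surjective b
      exact ⟨k, by push_cast [zsmul_eq_mul]; ring⟩
    · rintro ⟨k, rfl⟩
      exact ⟨((k : ZMod (p^n))), by push_cast [zsmul_eq_mul]; ring⟩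
  ext z
  simp only [AddMonoidHom.mem_ker, AddSubgroup.mem_prod]
  have hz : pPow p n m z = (p^m • z.1, p^m • z.2) := rfl
  rw [hz, Prod.ext_iff, ← key, ← key]
  simp

lemma aux_card_zm (hp : p.Prime) {m : ℕ} (hm : m ≤ n) :
    Nat.card (AddSubgroup.zmultiples (((p^(n-m) : ℕ)) : ZMod (p^n))) = p^m := by
  haveI : NeZero (p^n) := ⟨pow_ne_zero n hp.ne_zero⟩
  rw [Nat.card_zmultiples, ZMod.addOrderOf_coe _ (pow_ne_zero n hp.ne_zero),
    Nat.gcd_eq_right (pow_dvd_pow p (Nat.sub_le n m)),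
    Nat.pow_div (Nat.sub_le n m) hp.pos, Nat.sub_sub_self hm]

lemma aux_card_ker (hp : p.Prime) {m : ℕ} (hm : m ≤ n) :
    Nat.card (pPow p n m).ker = p^(2*m) := by
  rw [aux_ker_eq hp hm, Nat.card_congr (AddSubgroup.prodEquiv _ _).toEquiv, Nat.card_prod,
    aux_card_zm hp hm, ← pow_add, two_mul]

lemma aux_card_map (φ : (ZMod (p^n) × ZMod (p^n)) →+ (ZMod (p^n) × ZMod (p^n)))
    (H : AddSubgroup (ZMod (p^n) × ZMod (p^n))) (hker : φ.ker ≤ H) :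
    Nat.card H = Nat.card (H.map φ) * Nat.card φ.ker := by
  let ψ := φ.comp H.subtype
  have hrange : ψ.range = H.map φ := by
    rw [AddMonoidHom.range_comp, AddSubgroup.range_subtype]
  have hkerψ : ψ.ker = φ.ker.addSubgroupOf H := rfl
  have h1 : Nat.card H = Nat.card (↥H ⧸ ψ.ker) * Nat.card ψ.ker :=
    AddSubgroup.card_eq_card_quotient_mul_card_addSubgroup _
  rw [h1, Nat.card_congr (QuotientAddGroup.quotientKerEquivRange ψ).toEquiv, hrange,
    hkerψ, Nat.card_congr (AddSubgroup.addSubgroupOfEquivOfLe hker).toEquiv]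

lemma aux_sub_of_zmultiples {A : Type*} [AddCommGroup A] (x : A) (K : AddSubgroup A)
    (hK : K ≤ AddSubgroup.zmultiples x) : ∃ s : ℕ, K = AddSubgroup.zmultiples (s • x) := by
  let S : AddSubgroup ℤ := K.comap (zmultiplesHom A x)
  obtain ⟨a, ha⟩ := Int.subgroup_cyclic S
  have haS : ∀ k : ℤ, k • x ∈ K ↔ k ∈ S := fun k => Iff.rfl
  have hSz : S = AddSubgroup.zmultiples a := by
    rw [ha]; exact (AddSubgroup.zmultiples_eq_closure a).symm ▸ rfl
  have key : K = AddSubgroup.zmultiples (a • x) := by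
    apply le_antisymm
    · intro g hg
      obtain ⟨k, rfl⟩ := hK hg
      have hk : k ∈ S := (haS k).mp hg
      rw [hSz] at hk
      obtain ⟨t, rfl⟩ := hk
      exact ⟨t, by simp [smul_smul, smul_eq_mul]⟩
    · rw [AddSubgroup.zmultiples_le]
      exact (haS a).mpr (hSz ▸ AddSubgroup.mem_zmultiples a)
  refine ⟨a.natAbs, ?_⟩
  rw [key, ← natCast_zsmul]
  rcases Int.natAbs_eq a with h | h
  · rw [← h]
  · nth_rewrite 1 [h]
    rw [neg_zsmul, AddSubgroup.zmultiples_neg]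

lemma aux_mem_of_card {p : ℕ} (hp : p.Prime) {A : Type*} [AddCommGroup A] [Finite A] (x : A)
    (K : AddSubgroup A) (hK : K ≤ AddSubgroup.zmultiples x) {f e : ℕ}
    (hx : addOrderOf x = p^f) (hcard : Nat.card K = p^e) :
    p^(f-e) • x ∈ K := by
  obtain ⟨s, rfl⟩ := aux_sub_of_zmultiples x K hK
  rw [Nat.card_zmultiples, addOrderOf_nsmul, hx] at hcard
  have hgd : (p^f).gcd s ∣ p^f := Nat.gcd_dvd_left _ _
  have hmul : p^e * (p^f).gcd s = p^f := by
    rw [← hcard, Nat.div_mul_cancel hgd]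
  have hef : e ≤ f := by
    have : p^e ∣ p^f := ⟨(p^f).gcd s, hmul.symm⟩
    exact (Nat.pow_dvd_pow_iff_le_right hp.one_lt).mp this
  have hg : (p^f).gcd s = p^(f-e) := by
    have h2 : p^e * p^(f-e) = p^f := by rw [← pow_add, Nat.add_sub_cancel' hef]
    exact Nat.eq_of_mul_eq_mul_left (pow_pos hp.pos e) (by rw [hmul, h2])
  have bez := Nat.gcd_eq_gcd_ab (p^f) s
  rw [hg] at bez
  have h0 : ((p:ℤ)^f) • x = 0 := by
    rw [show ((p:ℤ)^f) = ((p^f : ℕ) : ℤ) by push_cast; ring, natCast_zsmul, ← hx,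
      addOrderOf_nsmul_eq_zero]
  have bez2 : ((p:ℤ))^(f-e) = (p^f).gcdA s * (p:ℤ)^f + (p^f).gcdB s * (s:ℤ) := by
    push_cast at bez ⊢; linarith
  have key : ((p:ℤ)^(f-e)) • x = (p^f).gcdB s • (s • x) := by
    rw [bez2, add_zsmul, mul_zsmul, mul_zsmul, h0, smul_zero, zero_add, natCast_zsmul]
  have : p^(f-e) • x = ((p^(f-e) : ℕ) : ℤ) • x := by rw [natCast_zsmul]
  rw [this, show ((p^(f-e):ℕ) : ℤ) = ((p:ℤ))^(f-e) by push_cast; ring, key]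
  exact AddSubgroup.zsmul_mem _ (AddSubgroup.mem_zmultiples _) _


/-- for a cyclic subgroup `F` and a cocyclic subgroup `H` of
`G = ℤ_{pⁿ} ⊕ ℤ_{pⁿ}`, one has `F ⊆ H` iff `l(F) - l(F ∩ H^Δ) ≤ n - l(H^Δ)`. -/
theorem stmt_9 (p : ℕ) (hp : p.Prime) (n : ℕ) (hn : 1 ≤ n)
    (F H : AddSubgroup (ZMod (p ^ n) × ZMod (p ^ n)))
    (hF : ∃ x, F = AddSubgroup.zmultiples x)
    (hH : IsAddCyclic ((ZMod (p ^ n) × ZMod (p ^ n)) ⧸ H)) :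
    F ≤ H ↔
      len p n F - len p n (F ⊓ deltaMap p n H) ≤ n - len p n (deltaMap p n H) := by
  haveI : NeZero (p^n) := ⟨pow_ne_zero n hp.ne_zero⟩
  obtain ⟨x, rfl⟩ := hF
  obtain ⟨hcardH, hlenH2⟩ := aux_card_len hp H
  -- exponent of G
  have hGexp : ∀ z : ZMod (p^n) × ZMod (p^n), p^n • z = 0 := by
    intro z
    have hcomp : ∀ a : ZMod (p^n), p^n • a = 0 := fun a => by
      rw [nsmul_eq_mul, ZMod.natCast_self, zero_mul]
    show (p^n • z.1, p^n • z.2) = 0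
    rw [hcomp, hcomp]; rfl
  -- card of quotient divides p^n
  have hQdvd : Nat.card ((ZMod (p^n) × ZMod (p^n)) ⧸ H) ∣ p^n := by
    obtain ⟨g, hg⟩ := hH.exists_generator
    have htop : AddSubgroup.zmultiples g = ⊤ := top_unique fun q _ => hg q
    have hcardq : Nat.card ((ZMod (p^n) × ZMod (p^n)) ⧸ H) = addOrderOf g := by
      rw [← Nat.card_zmultiples g, htop]
      exact (Nat.card_congr AddSubgroup.topEquiv.toEquiv).symm
    rw [hcardq]
    apply addOrderOf_dvd_of_nsmul_eq_zero
    obtain ⟨y, rfl⟩ := QuotientAddGroup.mk'_surjective H g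
    rw [← map_nsmul, hGexp, map_zero]
  have hlag := AddSubgroup.card_eq_card_quotient_mul_card_addSubgroup H
  rw [aux_cardG hp, hcardH] at hlag
  obtain ⟨j, hj, hcardQ⟩ := (Nat.dvd_prime_pow hp).mp hQdvd
  rw [hcardQ, ← pow_add] at hlag
  have hlag2 : 2*n = j + len p n H := Nat.pow_right_injective hp.two_le hlag
  have hlenHn : n ≤ len p n H := by omega
  set m : ℕ := len p n H - n with hm
  have hmn : m ≤ n := by omega
  have hj' : j = n - m := by omega
  -- p^(n-m) • z ∈ H for all z
  have hHexp : ∀ z : ZMod (p^n) × ZMod (p^n), p^(n-m) • z ∈ H := by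
    intro z
    rw [← QuotientAddGroup.eq_zero_iff]
    have : ((p^(n-m) • z : ZMod (p^n) × ZMod (p^n)) : (ZMod (p^n) × ZMod (p^n)) ⧸ H)
        = p^(n-m) • (z : (ZMod (p^n) × ZMod (p^n)) ⧸ H) := rfl
    rw [this]
    have hord : addOrderOf ((z : (ZMod (p^n) × ZMod (p^n)) ⧸ H)) ∣ p^(n-m) := by
      rw [← hj', ← hcardQ]
      exact addOrderOf_dvd_natCard _
    exact addOrderOf_dvd_iff_nsmul_eq_zero.mp hord
  -- kernel of pPow m is inside H
  have hkerH : (pPow p n m).ker ≤ H := by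
    intro z hz
    rw [AddMonoidHom.mem_ker] at hz
    have c1 : p^m • z.1 = 0 := congrArg Prod.fst hz
    have c2 : p^m • z.2 = 0 := congrArg Prod.snd hz
    obtain ⟨b1, hb1⟩ := (aux_zmod_ker hp hmn z.1).mp c1
    obtain ⟨b2, hb2⟩ := (aux_zmod_ker hp hmn z.2).mp c2
    have hz' : z = p^(n-m) • (b1, b2) := by
      have : p^(n-m) • (b1, b2) = (p^(n-m) • b1, p^(n-m) • b2) := rfl
      rw [this, Prod.ext_iff]
      constructor <;> simp only [nsmul_eq_mul] <;> push_cast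
      · rw [hb1]
      · rw [hb2]
    rw [hz']
    exact hHexp _
  have hΔdef : deltaMap p n H = H.map (pPow p n m) := rfl
  -- card of deltaMap
  obtain ⟨hcardΔ, _⟩ := aux_card_len hp (deltaMap p n H)
  have hmapcard := aux_card_map (pPow p n m) H hkerH
  rw [aux_card_ker hp hmn, ← hΔdef, hcardH, hcardΔ, ← pow_add] at hmapcard
  have hlenΔ : len p n (deltaMap p n H) = n - m := by
    have := Nat.pow_right_injective hp.two_le hmapcard
    omega
  -- F side
  set f : ℕ := len p n (AddSubgroup.zmultiples x) with hf
  set e : ℕ := len p n (AddSubgroup.zmultiples x ⊓ deltaMap p n H) with he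
  have hx : addOrderOf x = p^f := by
    rw [← Nat.card_zmultiples]; exact (aux_card_len hp _).1
  have hcardK : Nat.card (AddSubgroup.zmultiples x ⊓ deltaMap p n H : AddSubgroup _) = p^e :=
    (aux_card_len hp _).1
  have hKF : AddSubgroup.zmultiples x ⊓ deltaMap p n H ≤ AddSubgroup.zmultiples x := inf_le_left
  -- crux
  have hcrux : p^m • x ∈ deltaMap p n H ↔ f - e ≤ m := by
    constructor
    · intro hmem
      have hsub : AddSubgroup.zmultiples (p^m • x) ≤ AddSubgroup.zmultiples x ⊓ deltaMap p n H := by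
        rw [AddSubgroup.zmultiples_le]
        exact ⟨⟨((p^m : ℕ) : ℤ), natCast_zsmul _ _⟩, hmem⟩
      have hdvd := AddSubgroup.card_dvd_of_le hsub
      rw [Nat.card_zmultiples, hcardK, addOrderOf_nsmul' x (pow_ne_zero m hp.ne_zero), hx]
        at hdvd
      rcases le_total m f with hmf | hfm
      · rw [Nat.gcd_eq_right (pow_dvd_pow p hmf), Nat.pow_div hmf hp.pos] at hdvd
        have := (Nat.pow_dvd_pow_iff_le_right hp.one_lt).mp hdvd
        omega
      · omega
    · intro hle
      have hmem := aux_mem_of_card hp x _ hKF hx hcardK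
      have heq : p^(m-(f-e)) • (p^(f-e) • x) = p^m • x := by
        rw [smul_smul, ← pow_add, Nat.sub_add_cancel hle]
      rw [← heq]
      have hKΔ : AddSubgroup.zmultiples x ⊓ deltaMap p n H ≤ deltaMap p n H := inf_le_right
      exact hKΔ (AddSubgroup.nsmul_mem _ hmem _)
  rw [hlenΔ]
  constructor
  · intro hFH
    have hxH : x ∈ H := hFH (AddSubgroup.mem_zmultiples x)
    have : p^m • x ∈ deltaMap p n H := ⟨x, hxH, rfl⟩
    have := hcrux.mp this
    omega
  · intro hcond
    have h2 : f - e ≤ m := by omega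
    obtain ⟨h0, hh0, heq0⟩ := hcrux.mpr h2
    have hzero : p^m • (x - h0) = 0 := by
      have : pPow p n m h0 = p^m • h0 := rfl
      rw [smul_sub, ← this, heq0, sub_self]
    have hker : x - h0 ∈ (pPow p n m).ker := by
      rw [AddMonoidHom.mem_ker]; exact hzero
    have hxH : x ∈ H := by
      have := hkerH hker
      have : (x - h0) + h0 ∈ H := AddSubgroup.add_mem _ this hh0
      rwa [sub_add_cancel] at this
    exact AddSubgroup.zmultiples_le.mpr hxH
end

section
/- Let p be a prime, n ≥ 1, G = Z_{p^n} ⊕ Z_{p^n}, F a cyclic subgroup of G with generator set O_F, and χ an irreducible character of G with kernel the cocyclic subgroup H. Then χ(\underline{O_F}) = |F|(p-1)/p if l(F) - l(F ∩ H^Δ) ≤ n - l(H^Δ); χ(\underline{O_F}) = -|F|/p if l(F) - l(F ∩ H^Δ) = n - l(H^Δ) + 1; and χ(\underline{O_F}) = 0 otherwise. (Here F is nontrivial; for the trivial subgroup χ(\underline{O_F}) = 1.) -/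
open AddSubgroup

section helpers
variable {p n : ℕ}

lemma card_G [NeZero (p ^ n)] : Nat.card (ZMod (p ^ n) × ZMod (p ^ n)) = p ^ (2 * n) := by
  simp [Nat.card_prod, Nat.card_zmod, two_mul, pow_add]

lemma zmod_nsmul_eq (j : ℕ) (a : ZMod (p ^ n)) : j • a = ((j : ℕ) : ZMod (p ^ n)) * a := by
  rw [nsmul_eq_mul]

lemma exp_Z [NeZero (p ^ n)] (a : ZMod (p ^ n)) : p ^ n • a = 0 := by
  rw [zmod_nsmul_eq, ZMod.natCast_self, zero_mul]

lemma exp_G [NeZero (p ^ n)] (x : ZMod (p ^ n) × ZMod (p ^ n)) : p ^ n • x = 0 :=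
  Prod.ext (exp_Z x.1) (exp_Z x.2)

lemma card_len (hp : p.Prime) [NeZero (p ^ n)]
    (K : AddSubgroup (ZMod (p ^ n) × ZMod (p ^ n))) :
    Nat.card K = p ^ len p n K ∧ len p n K ≤ 2 * n := by
  have hdvd : Nat.card K ∣ p ^ (2 * n) := by
    rw [← card_G]; exact K.card_addSubgroup_dvd_card
  obtain ⟨a, ha, hcard⟩ := (Nat.dvd_prime_pow hp).mp hdvd
  have hlen : len p n K = a := by
    rw [len, hcard, hp.factorization_pow, Finsupp.single_eq_same]
  exact ⟨by rw [hlen, hcard], hlen ▸ ha⟩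

lemma zmod_smul_zero_iff (hp : p.Prime) [NeZero (p ^ n)] {m : ℕ} (hm : m ≤ n)
    (a : ZMod (p ^ n)) :
    p ^ m • a = 0 ↔ ∃ b : ZMod (p ^ n), a = p ^ (n - m) • b := by
  constructor
  · intro h
    have hval : ((p ^ m * a.val : ℕ) : ZMod (p ^ n)) = 0 := by
      rw [Nat.cast_mul, ZMod.natCast_val, ZMod.cast_id, ← zmod_nsmul_eq]
      exact h
    rw [ZMod.natCast_eq_zero_iff] at hval
    have h2 : p ^ (n - m) ∣ a.val := by
      have : p ^ m * p ^ (n - m) ∣ p ^ m * a.val := by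
        rw [← pow_add, Nat.add_sub_cancel' hm]; exact hval
      exact (mul_dvd_mul_iff_left (pow_ne_zero m hp.pos.ne')).mp this
    obtain ⟨c, hc⟩ := h2
    refine ⟨(c : ZMod (p ^ n)), ?_⟩
    rw [zmod_nsmul_eq, ← Nat.cast_mul, ← hc, ZMod.natCast_val, ZMod.cast_id]
  · rintro ⟨b, rfl⟩
    rw [smul_smul, ← pow_add, Nat.add_sub_cancel' hm]
    exact exp_Z b

end helpers

section cyclicfacts
variable {G : Type*} [AddCommGroup G] {p : ℕ}

lemma cast_pow_zsmul (p j : ℕ) (y : G) : ((p : ℤ) ^ j) • y = (p ^ j : ℕ) • y := by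
  rw [← Nat.cast_pow, natCast_zsmul]

lemma key_subA (hp : p.Prime) {f : G} {k j : ℕ} (hk : addOrderOf f = p ^ k) (hj : j ≤ k)
    {x : G} (hx : x ∈ AddSubgroup.zmultiples f) (h0 : p ^ j • x = 0) :
    x ∈ AddSubgroup.zmultiples ((p ^ (k - j) : ℕ) • f) := by
  obtain ⟨t, rfl⟩ := AddSubgroup.mem_zmultiples_iff.mp hx
  have h1 : ((p : ℤ) ^ j * t) • f = 0 := by
    rw [mul_smul, cast_pow_zsmul, smul_comm]
    rw [smul_comm] at h0
    exact h0
  rw [← addOrderOf_dvd_iff_zsmul_eq_zero, hk] at h1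
  have h2 : ((p : ℤ) ^ (k - j)) ∣ t := by
    have hkk : (p : ℤ) ^ j * (p : ℤ) ^ (k - j) ∣ (p : ℤ) ^ j * t := by
      rw [← pow_add, Nat.add_sub_cancel' hj]
      exact_mod_cast h1
    have hpj : ((p : ℤ) ^ j) ≠ 0 := pow_ne_zero _ (by exact_mod_cast hp.pos.ne')
    exact (mul_dvd_mul_iff_left hpj).mp hkk
  obtain ⟨s, rfl⟩ := h2
  rw [AddSubgroup.mem_zmultiples_iff]
  exact ⟨s, by rw [mul_comm, mul_smul, cast_pow_zsmul]⟩

lemma key_subB (hp : p.Prime) {f x : G} {k : ℕ} (hk : addOrderOf f = p ^ k)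
    (hx : x ∈ AddSubgroup.zmultiples f)
    (hne : AddSubgroup.zmultiples x ≠ AddSubgroup.zmultiples f) :
    x ∈ AddSubgroup.zmultiples ((p : ℕ) • f) := by
  obtain ⟨t, rfl⟩ := AddSubgroup.mem_zmultiples_iff.mp hx
  by_cases hdvd : (p : ℤ) ∣ t
  · obtain ⟨s, rfl⟩ := hdvd
    rw [AddSubgroup.mem_zmultiples_iff]
    refine ⟨s, ?_⟩
    rw [mul_comm, mul_smul, natCast_zsmul]
  · exfalso
    apply hne
    have hprime : Prime (p : ℤ) := Nat.prime_iff_prime_int.mp hp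
    have hcop : IsCoprime ((p : ℤ) ^ k) t := (hprime.coprime_iff_not_dvd.mpr hdvd).pow_left
    obtain ⟨a, b, hab⟩ := hcop
    have hf : f ∈ AddSubgroup.zmultiples (t • f) := by
      rw [AddSubgroup.mem_zmultiples_iff]
      refine ⟨b, ?_⟩
      have : (b * t) • f = f := by
        have h1 : (a * (p : ℤ) ^ k) • f = 0 := by
          rw [mul_smul, cast_pow_zsmul, ← hk, addOrderOf_nsmul_eq_zero, smul_zero]
        calc (b * t) • f = (a * (p : ℤ) ^ k) • f + (b * t) • f := by rw [h1, zero_add]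
        _ = ((a * (p : ℤ) ^ k) + b * t) • f := by rw [add_smul]
        _ = f := by rw [hab, one_smul]
      rw [← mul_smul]
      exact this
    have h1 : AddSubgroup.zmultiples f ≤ AddSubgroup.zmultiples (t • f) :=
      AddSubgroup.zmultiples_le_of_mem hf
    have h2 : AddSubgroup.zmultiples (t • f) ≤ AddSubgroup.zmultiples f :=
      AddSubgroup.zmultiples_le_of_mem hx
    exact le_antisymm h2 h1

lemma key_subC (hp : p.Prime) {f : G} {k j : ℕ} (hk : addOrderOf f = p ^ k) (hj : j ≤ k) :
    addOrderOf ((p ^ j : ℕ) • f) = p ^ (k - j) := by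
  rw [addOrderOf_nsmul' _ (pow_ne_zero _ hp.pos.ne'), hk]
  rw [Nat.gcd_eq_right (pow_dvd_pow p hj), Nat.pow_div hj hp.pos]

lemma key_L8 [Finite G] (hp : p.Prime) {f : G} {k j : ℕ} (hk : addOrderOf f = p ^ k)
    (hj : j ≤ k) {K : AddSubgroup G} (hK : K ≤ AddSubgroup.zmultiples f)
    (hcard : Nat.card K = p ^ (k - j)) :
    K = AddSubgroup.zmultiples ((p ^ j : ℕ) • f) := by
  have hsub : K ≤ AddSubgroup.zmultiples ((p ^ j : ℕ) • f) := by
    intro x hx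
    have h0 : p ^ (k - j) • x = 0 := by
      have h1 : Nat.card K • (⟨x, hx⟩ : K) = 0 := card_nsmul_eq_zero'
      have h2 := congrArg (Subtype.val) h1
      simpa [hcard] using h2
    have h3 := key_subA hp hk (Nat.sub_le k j) (hK hx) h0
    rwa [Nat.sub_sub_self hj] at h3
  refine AddSubgroup.eq_of_le_of_card_ge hsub ?_
  rw [Nat.card_zmultiples, key_subC hp hk hj, hcard]

end cyclicfacts

section quot
variable {p n : ℕ}

lemma card_quotient (hp : p.Prime) [NeZero (p ^ n)]
    (H : AddSubgroup (ZMod (p ^ n) × ZMod (p ^ n))) :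
    Nat.card ((ZMod (p ^ n) × ZMod (p ^ n)) ⧸ H) = p ^ (2 * n - len p n H) := by
  obtain ⟨hc, hle⟩ := card_len hp H
  have h := AddSubgroup.card_eq_card_quotient_mul_card_addSubgroup H
  rw [card_G, hc] at h
  have hq : Nat.card ((ZMod (p ^ n) × ZMod (p ^ n)) ⧸ H) = p ^ (2 * n) / p ^ len p n H := by
    rw [h, Nat.mul_div_cancel _ (pow_pos hp.pos _)]
  rw [hq, Nat.pow_div hle hp.pos]

lemma pow_card_quot_mem (hp : p.Prime) [NeZero (p ^ n)]
    (H : AddSubgroup (ZMod (p ^ n) × ZMod (p ^ n))) (g : ZMod (p ^ n) × ZMod (p ^ n)) :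
    p ^ (2 * n - len p n H) • g ∈ H := by
  rw [← QuotientAddGroup.eq_zero_iff]
  have h1 : ((p ^ (2 * n - len p n H) • g : ZMod (p ^ n) × ZMod (p ^ n)) :
      (ZMod (p ^ n) × ZMod (p ^ n)) ⧸ H) = p ^ (2 * n - len p n H) • (g : (ZMod (p ^ n) × ZMod (p ^ n)) ⧸ H) :=
    QuotientAddGroup.mk_nsmul H g _
  rw [h1, ← card_quotient hp H]
  exact card_nsmul_eq_zero'

lemma len_ge_n (hp : p.Prime) (hn : 1 ≤ n) [NeZero (p ^ n)]
    {χ : AddChar (ZMod (p ^ n) × ZMod (p ^ n)) ℂ}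
    {H : AddSubgroup (ZMod (p ^ n) × ZMod (p ^ n))}
    (hker : ∀ g, χ g = 1 ↔ g ∈ H) : n ≤ len p n H := by
  set G' := ZMod (p ^ n) × ZMod (p ^ n)
  have hconst : ∀ a b : G', (a : G' ⧸ H) = b → χ a = χ b := by
    intro a b hab
    have h : -a + b ∈ H := by
      rwa [QuotientAddGroup.eq] at hab
    have : χ b = χ a * χ (-a + b) := by
      rw [← AddChar.map_add_eq_mul, add_neg_cancel_left]
    rw [this, (hker _).mpr h, mul_one]
  have hne : ∀ a : G', χ a ≠ 0 := by
    intro a h0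
    have : χ a * χ (-a) = 1 := by rw [← AddChar.map_add_eq_mul, add_neg_cancel, AddChar.map_zero_eq_one]
    rw [h0, zero_mul] at this
    exact zero_ne_one this
  let f : Multiplicative (G' ⧸ H) →* ℂ :=
    { toFun := fun q => χ (Multiplicative.toAdd q).out
      map_one' := by
        have : ((Multiplicative.toAdd (1 : Multiplicative (G' ⧸ H))).out : G' ⧸ H) = ((0 : G') : G' ⧸ H) := by
          simp [QuotientAddGroup.out_eq']
        rw [hconst _ _ this, AddChar.map_zero_eq_one]
      map_mul' := by
        intro a b
        have h1 : ((Multiplicative.toAdd (a * b)).out : G' ⧸ H) =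
            (((Multiplicative.toAdd a).out + (Multiplicative.toAdd b).out : G') : G' ⧸ H) := by
          simp [QuotientAddGroup.out_eq']
        rw [hconst _ _ h1, AddChar.map_add_eq_mul] }
  have hinj : Function.Injective f := by
    intro a b hab
    have h1 : χ ((Multiplicative.toAdd a).out) = χ ((Multiplicative.toAdd b).out) := hab
    have h2 : χ (-(Multiplicative.toAdd a).out + (Multiplicative.toAdd b).out) = 1 := by
      have h3 : χ ((Multiplicative.toAdd a).out) *
          χ (-(Multiplicative.toAdd a).out + (Multiplicative.toAdd b).out) =
          χ ((Multiplicative.toAdd b).out) := by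
        rw [← AddChar.map_add_eq_mul, add_neg_cancel_left]
      have h4 := h1 ▸ h3
      exact mul_left_cancel₀ (hne _) (by rw [h4, mul_one])
    have h5 : ((Multiplicative.toAdd a).out : G' ⧸ H) = ((Multiplicative.toAdd b).out : G' ⧸ H) := by
      rw [QuotientAddGroup.eq]
      exact (hker _).mp h2
    rw [QuotientAddGroup.out_eq', QuotientAddGroup.out_eq'] at h5
    exact Multiplicative.toAdd.injective h5
  have hcyc : IsCyclic (Multiplicative (G' ⧸ H)) := isCyclic_of_subgroup_isDomain f hinj
  have hexp : Monoid.exponent (Multiplicative (G' ⧸ H)) ∣ p ^ n := by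
    apply Monoid.exponent_dvd_of_forall_pow_eq_one
    intro g
    have : Multiplicative.toAdd (g ^ p ^ n) = 0 := by
      rw [toAdd_pow]
      induction (Multiplicative.toAdd g) using QuotientAddGroup.induction_on with
      | _ x =>
        rw [← QuotientAddGroup.mk_nsmul, exp_G, QuotientAddGroup.mk_zero]
    simpa using congrArg Multiplicative.ofAdd this
  have hcard : Nat.card (G' ⧸ H) ∣ p ^ n := by
    have := IsCyclic.exponent_eq_card (α := Multiplicative (G' ⧸ H))
    rw [this] at hexp
    rwa [Nat.card_congr (Multiplicative.toAdd (α := G' ⧸ H))] at hexp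
  rw [card_quotient hp H] at hcard
  have hle2 := (card_len hp H).2
  have := (Nat.pow_dvd_pow_iff_le_right hp.one_lt).mp hcard
  omega

end quot

section kerp
variable {p n : ℕ}

lemma pPow_apply (m : ℕ) (x : ZMod (p ^ n) × ZMod (p ^ n)) : pPow p n m x = p ^ m • x := rfl

lemma mem_ker_pPow {m : ℕ} {x : ZMod (p ^ n) × ZMod (p ^ n)} :
    x ∈ (pPow p n m).ker ↔ p ^ m • x = 0 := AddMonoidHom.mem_ker

lemma zmod_mem_zmultiples_iff (hp : p.Prime) [NeZero (p ^ n)] {j : ℕ} (a : ZMod (p ^ n)) :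
    a ∈ AddSubgroup.zmultiples ((p ^ j : ℕ) : ZMod (p ^ n)) ↔
      ∃ b : ZMod (p ^ n), a = p ^ j • b := by
  have hc : ((p ^ j : ℕ) : ZMod (p ^ n)) = p ^ j • (1 : ZMod (p ^ n)) := by
    rw [zmod_nsmul_eq, mul_one]
  constructor
  · rintro ⟨t, rfl⟩
    exact ⟨t • 1, by rw [hc, smul_comm]⟩
  · rintro ⟨b, rfl⟩
    refine ⟨(b.val : ℤ), ?_⟩
    show (b.val : ℤ) • ((p ^ j : ℕ) : ZMod (p ^ n)) = _
    rw [natCast_zsmul, zmod_nsmul_eq, ZMod.natCast_val, ZMod.cast_id, mul_comm, ← zmod_nsmul_eq]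

lemma ker_pPow_eq_prod (hp : p.Prime) [NeZero (p ^ n)] {m : ℕ} (hm : m ≤ n) :
    (pPow p n m).ker =
      (AddSubgroup.zmultiples ((p ^ (n - m) : ℕ) : ZMod (p ^ n))).prod
        (AddSubgroup.zmultiples ((p ^ (n - m) : ℕ) : ZMod (p ^ n))) := by
  ext x
  rw [mem_ker_pPow, AddSubgroup.mem_prod, zmod_mem_zmultiples_iff hp, zmod_mem_zmultiples_iff hp]
  constructor
  · intro h
    have h1 : p ^ m • x.1 = 0 := congrArg Prod.fst h
    have h2 : p ^ m • x.2 = 0 := congrArg Prod.snd h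
    exact ⟨(zmod_smul_zero_iff hp hm x.1).mp h1, (zmod_smul_zero_iff hp hm x.2).mp h2⟩
  · rintro ⟨h1, h2⟩
    exact Prod.ext ((zmod_smul_zero_iff hp hm x.1).mpr h1) ((zmod_smul_zero_iff hp hm x.2).mpr h2)

lemma card_zmultiples_pow (hp : p.Prime) [NeZero (p ^ n)] {j : ℕ} (hj : j ≤ n) :
    Nat.card (AddSubgroup.zmultiples ((p ^ (n - j) : ℕ) : ZMod (p ^ n))) = p ^ j := by
  rw [Nat.card_zmultiples, ZMod.addOrderOf_coe _ (NeZero.ne _),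
    Nat.gcd_eq_right (pow_dvd_pow p (Nat.sub_le n j)), Nat.pow_div (Nat.sub_le n j) hp.pos,
    Nat.sub_sub_self hj]

lemma card_ker_pPow (hp : p.Prime) [NeZero (p ^ n)] {m : ℕ} (hm : m ≤ n) :
    Nat.card (pPow p n m).ker = p ^ (2 * m) := by
  rw [ker_pPow_eq_prod hp hm]
  rw [Nat.card_congr (AddSubgroup.prodEquiv _ _).toEquiv, Nat.card_prod,
    card_zmultiples_pow hp hm, ← pow_add, two_mul]

lemma card_map_pPow (hp : p.Prime) [NeZero (p ^ n)] {m : ℕ} (hm : m ≤ n)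
    {H : AddSubgroup (ZMod (p ^ n) × ZMod (p ^ n))} (hΩ : (pPow p n m).ker ≤ H) :
    Nat.card (H.map (pPow p n m)) * p ^ (2 * m) = Nat.card H := by
  set φ := (pPow p n m).comp H.subtype with hφ
  have hrange : φ.range = H.map (pPow p n m) := by
    ext x
    simp only [AddMonoidHom.mem_range, AddSubgroup.mem_map, AddMonoidHom.comp_apply,
      AddSubgroup.coe_subtype, hφ]
    constructor
    · rintro ⟨y, rfl⟩; exact ⟨y, y.2, rfl⟩
    · rintro ⟨y, hy, rfl⟩; exact ⟨⟨y, hy⟩, rfl⟩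
  have hkerequiv : Nat.card φ.ker = p ^ (2 * m) := by
    rw [← card_ker_pPow hp hm]
    refine Nat.card_congr ⟨fun x => ⟨x.1.1, x.2⟩, fun y => ⟨⟨y.1, hΩ y.2⟩, y.2⟩, ?_, ?_⟩
    · intro x; rfl
    · intro y; rfl
  have h1 : Nat.card H = Nat.card (H ⧸ φ.ker) * Nat.card φ.ker :=
    AddSubgroup.card_eq_card_quotient_mul_card_addSubgroup _
  have h2 : Nat.card (H ⧸ φ.ker) = Nat.card (H.map (pPow p n m)) := by
    rw [← hrange]
    exact Nat.card_congr (QuotientAddGroup.quotientKerEquivRange φ).toEquiv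
  rw [h1, h2, hkerequiv]

end kerp

section charsum
variable {p n : ℕ} [NeZero (p ^ n)]

lemma sum_char_subgroup_triv (χ : AddChar (ZMod (p ^ n) × ZMod (p ^ n)) ℂ)
    (K : AddSubgroup (ZMod (p ^ n) × ZMod (p ^ n))) (h : ∀ x ∈ K, χ x = 1) :
    ∑ g ∈ (Set.toFinite (K : Set (ZMod (p ^ n) × ZMod (p ^ n)))).toFinset, χ g
      = (Nat.card K : ℂ) := by
  rw [Finset.sum_congr rfl (fun x hx => h x (by simpa [Set.Finite.mem_toFinset] using hx))]
  rw [Finset.sum_const, nsmul_eq_mul, mul_one]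
  congr 1
  rw [← Set.ncard_coe_finset, Set.Finite.coe_toFinset, ← Nat.card_coe_set_eq]
  rfl

lemma sum_char_subgroup_zero (χ : AddChar (ZMod (p ^ n) × ZMod (p ^ n)) ℂ)
    (K : AddSubgroup (ZMod (p ^ n) × ZMod (p ^ n))) {x : ZMod (p ^ n) × ZMod (p ^ n)}
    (hx : x ∈ K) (hχ : χ x ≠ 1) :
    ∑ g ∈ (Set.toFinite (K : Set (ZMod (p ^ n) × ZMod (p ^ n)))).toFinset, χ g = 0 := by
  set S := ∑ g ∈ (Set.toFinite (K : Set (ZMod (p ^ n) × ZMod (p ^ n)))).toFinset, χ g with hS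
  have key : χ x * S = S := by
    rw [hS, Finset.mul_sum]
    simp_rw [← AddChar.map_add_eq_mul]
    refine Finset.sum_nbij' (fun g => x + g) (fun g => -x + g) ?_ ?_ ?_ ?_ ?_
    · intro a ha
      simp only [Set.Finite.mem_toFinset, SetLike.mem_coe] at *
      exact K.add_mem hx ha
    · intro a ha
      simp only [Set.Finite.mem_toFinset, SetLike.mem_coe] at *
      exact K.add_mem (K.neg_mem hx) ha
    · intro a _; rw [neg_add_cancel_left]
    · intro a _; rw [add_neg_cancel_left]
    · intro a _; rfl
  by_contra hS0
  exact hχ (mul_right_cancel₀ hS0 (by rw [key, one_mul]))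

end charsum

section claims
variable {p n : ℕ}

open AddSubgroup

lemma pow_orderOf_smul_eq_zero {G : Type*} [AddCommGroup G] {f x : G} {k : ℕ}
    (hk : addOrderOf f = p ^ k) (hx : x ∈ zmultiples f) : p ^ k • x = 0 := by
  obtain ⟨t, rfl⟩ := mem_zmultiples_iff.mp hx
  rw [smul_comm, ← hk, addOrderOf_nsmul_eq_zero, smul_zero]

lemma card_inf_le (hp : p.Prime) [NeZero (p ^ n)]
    {A B : AddSubgroup (ZMod (p ^ n) × ZMod (p ^ n))} (hAB : A ≤ B) {a b : ℕ}
    (hA : Nat.card A = p ^ a) (hB : Nat.card B = p ^ b) : a ≤ b := by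
  have : Nat.card A ∣ Nat.card B := AddSubgroup.card_dvd_of_le hAB
  rw [hA, hB] at this
  exact (Nat.pow_dvd_pow_iff_le_right hp.one_lt).mp this

lemma map_pPow_le {m : ℕ} {H : AddSubgroup (ZMod (p ^ n) × ZMod (p ^ n))} :
    H.map (pPow p n m) ≤ H := by
  rintro x ⟨h, hh, rfl⟩
  exact AddSubgroup.nsmul_mem H hh _

lemma claim1 (hp : p.Prime) [NeZero (p ^ n)]
    {H : AddSubgroup (ZMod (p ^ n) × ZMod (p ^ n))} {m : ℕ} (hm : m ≤ n)
    (hΩ : (pPow p n m).ker ≤ H) (f : ZMod (p ^ n) × ZMod (p ^ n)) {k : ℕ}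
    (hk : addOrderOf f = p ^ k) :
    k - len p n (zmultiples f ⊓ H.map (pPow p n m)) ≤ m ↔ zmultiples f ≤ H := by
  set C := H.map (pPow p n m) with hC
  set F := zmultiples f with hF
  have hcardF : Nat.card F = p ^ k := by rw [hF, Nat.card_zmultiples, hk]
  set lFC := len p n (F ⊓ C) with hlFC
  have hcardFC : Nat.card (F ⊓ C : AddSubgroup _) = p ^ lFC := (card_len hp _).1
  have hlFCk : lFC ≤ k := card_inf_le hp inf_le_left hcardFC hcardF
  constructor
  · intro h
    by_cases hkm : k ≤ m
    · intro x hx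
      apply hΩ
      rw [mem_ker_pPow]
      have h1 : p ^ k • x = 0 := pow_orderOf_smul_eq_zero hk hx
      calc p ^ m • x = p ^ (m - k) • p ^ k • x := by
            rw [smul_smul, ← pow_add, Nat.sub_add_cancel hkm]
      _ = 0 := by rw [h1, smul_zero]
    · push_neg at hkm
      set j := k - lFC with hj
      have hjk : j ≤ k := Nat.sub_le _ _
      have hL8 : F ⊓ C = zmultiples ((p ^ j : ℕ) • f) := by
        apply key_L8 hp hk hjk inf_le_left
        rw [hcardFC]
        congr 1
        omega
      have hmem : (p ^ j : ℕ) • f ∈ C := by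
        have : (p ^ j : ℕ) • f ∈ F ⊓ C := by
          rw [hL8]; exact mem_zmultiples _
        exact this.2
      obtain ⟨h', hh', heq⟩ := hmem
      have heq' : p ^ m • h' = p ^ j • f := heq
      have hjm : j ≤ m := h
      set y := f - p ^ (m - j) • h' with hy
      have hy1 : p ^ j • y = 0 := by
        rw [hy, smul_sub, smul_smul, ← pow_add, Nat.add_sub_cancel' hjm, heq', sub_self]
      have hy2 : y ∈ H := by
        apply hΩ
        rw [mem_ker_pPow]
        calc p ^ m • y = p ^ (m - j) • p ^ j • y := by
              rw [smul_smul, ← pow_add, Nat.sub_add_cancel hjm]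
        _ = 0 := by rw [hy1, smul_zero]
      have hf : f ∈ H := by
        have : f = y + p ^ (m - j) • h' := by rw [hy, sub_add_cancel]
        rw [this]
        exact H.add_mem hy2 (AddSubgroup.nsmul_mem H hh' _)
      rw [hF]
      exact zmultiples_le_of_mem hf
  · intro h
    by_cases hkm : k ≤ m
    · omega
    · push_neg at hkm
      have hmk : m ≤ k := hkm.le
      have hle : zmultiples ((p ^ m : ℕ) • f) ≤ F ⊓ C := by
        apply zmultiples_le_of_mem
        refine mem_inf.mpr ⟨mem_zmultiples_iff.mpr ⟨(p ^ m : ℤ), by rw [cast_pow_zsmul]⟩,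
          ⟨f, h (mem_zmultiples f), rfl⟩⟩
      have hcard' : Nat.card (zmultiples ((p ^ m : ℕ) • f)) = p ^ (k - m) := by
        rw [Nat.card_zmultiples, key_subC hp hk hmk]
      have := card_inf_le hp hle hcard' hcardFC
      omega

lemma inf_eq_inf_of_ne (hp : p.Prime) [NeZero (p ^ n)]
    {H : AddSubgroup (ZMod (p ^ n) × ZMod (p ^ n))} {m : ℕ}
    (f : ZMod (p ^ n) × ZMod (p ^ n)) {k : ℕ} (hk : addOrderOf f = p ^ k)
    (hFH : ¬ zmultiples f ≤ H) :
    zmultiples f ⊓ H.map (pPow p n m) = zmultiples ((p : ℕ) • f) ⊓ H.map (pPow p n m) := by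
  have hF'F : zmultiples ((p : ℕ) • f) ≤ zmultiples f := by
    apply zmultiples_le_of_mem
    rw [mem_zmultiples_iff]
    exact ⟨(p : ℤ), by rw [natCast_zsmul]⟩
  apply le_antisymm
  · intro x hx
    refine ⟨?_, hx.2⟩
    have hxH : x ∈ H := map_pPow_le hx.2
    have hne : zmultiples x ≠ zmultiples f := by
      intro hcon
      exact hFH (hcon ▸ zmultiples_le_of_mem hxH)
    exact key_subB hp hk hx.1 hne
  · exact inf_le_inf_right _ hF'F

lemma inf_eq_inf_of_j (hp : p.Prime) [NeZero (p ^ n)]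
    {H : AddSubgroup (ZMod (p ^ n) × ZMod (p ^ n))} {m : ℕ}
    (f : ZMod (p ^ n) × ZMod (p ^ n)) {k : ℕ} (hk : addOrderOf f = p ^ k)
    (hj : 1 ≤ k - len p n (zmultiples f ⊓ H.map (pPow p n m))) :
    zmultiples f ⊓ H.map (pPow p n m) = zmultiples ((p : ℕ) • f) ⊓ H.map (pPow p n m) := by
  set C := H.map (pPow p n m) with hC
  set F := zmultiples f with hF
  have hcardF : Nat.card F = p ^ k := by rw [hF, Nat.card_zmultiples, hk]
  set lFC := len p n (F ⊓ C) with hlFC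
  have hcardFC : Nat.card (F ⊓ C : AddSubgroup _) = p ^ lFC := (card_len hp _).1
  have hlFCk : lFC ≤ k := card_inf_le hp inf_le_left hcardFC hcardF
  set j := k - lFC with hjdef
  have hjk : j ≤ k := Nat.sub_le _ _
  have hL8 : F ⊓ C = zmultiples ((p ^ j : ℕ) • f) := by
    apply key_L8 hp hk hjk inf_le_left
    rw [hcardFC]
    congr 1
    omega
  have hsub : F ⊓ C ≤ zmultiples ((p : ℕ) • f) := by
    rw [hL8]
    apply zmultiples_le_of_mem
    rw [mem_zmultiples_iff]
    refine ⟨(p ^ (j - 1) : ℤ), ?_⟩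
    rw [cast_pow_zsmul, smul_smul, ← pow_succ, Nat.sub_add_cancel hj]
  apply le_antisymm
  · exact le_inf hsub inf_le_right
  · apply inf_le_inf_right
    apply zmultiples_le_of_mem
    rw [mem_zmultiples_iff]
    exact ⟨(p : ℤ), by rw [natCast_zsmul]⟩

end claims

section genset
variable {p n : ℕ}
open AddSubgroup

lemma k_pos (hp : p.Prime) {G : Type*} [AddCommGroup G] {f : G} (hf : f ≠ 0) {k : ℕ}
    (hk : addOrderOf f = p ^ k) : 1 ≤ k := by
  rcases Nat.eq_zero_or_pos k with h | h
  · exfalso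
    rw [h, pow_zero] at hk
    exact hf (AddMonoid.addOrderOf_eq_one_iff.mp hk)
  · exact h

lemma gen_set (hp : p.Prime) [NeZero (p ^ n)] {f : ZMod (p ^ n) × ZMod (p ^ n)} (hf : f ≠ 0)
    {k : ℕ} (hk : addOrderOf f = p ^ k) :
    {g | zmultiples g = zmultiples f} =
      ((zmultiples f : Set (ZMod (p ^ n) × ZMod (p ^ n))) \
        (zmultiples ((p : ℕ) • f) : Set (ZMod (p ^ n) × ZMod (p ^ n)))) := by
  have hk1 : 1 ≤ k := k_pos hp hf hk
  ext g
  simp only [Set.mem_setOf_eq, Set.mem_diff, SetLike.mem_coe]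
  constructor
  · intro h
    constructor
    · rw [← h]; exact mem_zmultiples g
    · intro hg
      have hle : zmultiples f ≤ zmultiples ((p : ℕ) • f) := h ▸ zmultiples_le_of_mem hg
      have h1 : Nat.card (zmultiples f) = p ^ k := by rw [Nat.card_zmultiples, hk]
      have h2 : Nat.card (zmultiples ((p : ℕ) • f)) = p ^ (k - 1) := by
        have h3 := key_subC (j := 1) hp hk hk1
        rw [pow_one] at h3
        rw [Nat.card_zmultiples, h3]
      have := card_inf_le hp hle h1 h2
      omega
  · rintro ⟨h1, h2⟩
    by_contra hne
    exact h2 (key_subB hp hk h1 hne)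

lemma finsum_gen_split [NeZero (p ^ n)] (hp : p.Prime)
    (χ : AddChar (ZMod (p ^ n) × ZMod (p ^ n)) ℂ)
    {f : ZMod (p ^ n) × ZMod (p ^ n)} (hf : f ≠ 0) {k : ℕ} (hk : addOrderOf f = p ^ k) :
    ∑ᶠ g ∈ {g | zmultiples g = zmultiples f}, χ g =
      (∑ g ∈ (Set.toFinite ((zmultiples f : Set (ZMod (p ^ n) × ZMod (p ^ n))))).toFinset, χ g)
      - (∑ g ∈ (Set.toFinite ((zmultiples ((p : ℕ) • f) :
          Set (ZMod (p ^ n) × ZMod (p ^ n))))).toFinset, χ g) := by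
  rw [gen_set hp hf hk]
  have hsub : (Set.toFinite ((zmultiples ((p : ℕ) • f) :
      Set (ZMod (p ^ n) × ZMod (p ^ n))))).toFinset ⊆
      (Set.toFinite ((zmultiples f : Set (ZMod (p ^ n) × ZMod (p ^ n))))).toFinset := by
    intro x hx
    simp only [Set.Finite.mem_toFinset, SetLike.mem_coe] at *
    have hle : zmultiples ((p : ℕ) • f) ≤ zmultiples f :=
      zmultiples_le_of_mem (mem_zmultiples_iff.mpr ⟨(p : ℤ), by rw [natCast_zsmul]⟩)
    exact hle hx
  rw [← Finset.sum_sdiff_eq_sub hsub]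
  have hset : ((zmultiples f : Set (ZMod (p ^ n) × ZMod (p ^ n))) \
      (zmultiples ((p : ℕ) • f) : Set (ZMod (p ^ n) × ZMod (p ^ n)))) =
      ↑((Set.toFinite ((zmultiples f : Set (ZMod (p ^ n) × ZMod (p ^ n))))).toFinset \
        (Set.toFinite ((zmultiples ((p : ℕ) • f) :
          Set (ZMod (p ^ n) × ZMod (p ^ n))))).toFinset) := by
    rw [Finset.coe_sdiff, Set.Finite.coe_toFinset, Set.Finite.coe_toFinset]
  rw [hset, finsum_mem_coe_finset]

end genset

section final
variable {p n : ℕ}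
open AddSubgroup

lemma ker_le_H (hp : p.Prime) (hn : 1 ≤ n) [NeZero (p ^ n)]
    {χ : AddChar (ZMod (p ^ n) × ZMod (p ^ n)) ℂ}
    {H : AddSubgroup (ZMod (p ^ n) × ZMod (p ^ n))}
    (hker : ∀ g, χ g = 1 ↔ g ∈ H) : (pPow p n (len p n H - n)).ker ≤ H := by
  have hln : n ≤ len p n H := len_ge_n hp hn hker
  have hl2n : len p n H ≤ 2 * n := (card_len hp H).2
  have hm : len p n H - n ≤ n := by omega
  intro x hx
  rw [mem_ker_pPow] at hx
  obtain ⟨b1, hb1⟩ := (zmod_smul_zero_iff hp hm x.1).mp (congrArg Prod.fst hx)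
  obtain ⟨b2, hb2⟩ := (zmod_smul_zero_iff hp hm x.2).mp (congrArg Prod.snd hx)
  have hx2 : x = p ^ (n - (len p n H - n)) • (b1, b2) := Prod.ext hb1 hb2
  have h2 : n - (len p n H - n) = 2 * n - len p n H := by omega
  rw [hx2, h2]
  exact pow_card_quot_mem hp H _


/-- values of an irreducible character `χ` with kernel the cocyclic
subgroup `H` on the generator set `O_F` of a nontrivial cyclic subgroup `F` of
`G = ℤ_{pⁿ} ⊕ ℤ_{pⁿ}`: `|F|(p-1)/p`, `-|F|/p` or `0` according to the position of
`l(F) - l(F ∩ H^Δ)` relative to `n - l(H^Δ)`; and `χ(O_F) = 1` for the trivial `F`. -/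
theorem stmt_10 (p : ℕ) (hp : p.Prime) (n : ℕ) (hn : 1 ≤ n) [NeZero (p ^ n)]
    (χ : AddChar (ZMod (p ^ n) × ZMod (p ^ n)) ℂ)
    (H : AddSubgroup (ZMod (p ^ n) × ZMod (p ^ n)))
    (hker : ∀ g, χ g = 1 ↔ g ∈ H)
    (F : AddSubgroup (ZMod (p ^ n) × ZMod (p ^ n)))
    (hF : ∃ x, F = AddSubgroup.zmultiples x) (hF0 : F ≠ ⊥) :
    ((len p n F - len p n (F ⊓ deltaMap p n H) ≤ n - len p n (deltaMap p n H)) →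
      ∑ᶠ g ∈ {g | AddSubgroup.zmultiples g = F}, χ g =
        (Nat.card F : ℂ) * ((p : ℂ) - 1) / p) ∧
    ((len p n F - len p n (F ⊓ deltaMap p n H) = n - len p n (deltaMap p n H) + 1) →
      ∑ᶠ g ∈ {g | AddSubgroup.zmultiples g = F}, χ g = -(Nat.card F : ℂ) / p) ∧
    (¬ (len p n F - len p n (F ⊓ deltaMap p n H) ≤ n - len p n (deltaMap p n H)) →
     ¬ (len p n F - len p n (F ⊓ deltaMap p n H) = n - len p n (deltaMap p n H) + 1) →
      ∑ᶠ g ∈ {g | AddSubgroup.zmultiples g = F}, χ g = 0) ∧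
    (∑ᶠ g ∈ {g | AddSubgroup.zmultiples g = (⊥ : AddSubgroup (ZMod (p ^ n) × ZMod (p ^ n)))},
      χ g = 1) := by
  
  obtain ⟨f, rfl⟩ := hF
  have hzm0 : zmultiples (0 : ZMod (p ^ n) × ZMod (p ^ n)) = ⊥ := by
    ext x; simp [mem_zmultiples_iff, eq_comm]
  have hf : f ≠ 0 := by
    intro h
    exact hF0 (by rw [h, hzm0])
  have hp0 : (p : ℂ) ≠ 0 := by exact_mod_cast hp.pos.ne'
  -- bookkeeping
  have hln : n ≤ len p n H := len_ge_n hp hn hker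
  have hl2n : len p n H ≤ 2 * n := (card_len hp H).2
  set m := len p n H - n with hmdef
  have hm : m ≤ n := by omega
  have hΩ : (pPow p n m).ker ≤ H := ker_le_H hp hn hker
  have hΔ : deltaMap p n H = H.map (pPow p n m) := by rw [deltaMap]
  have hcardH : Nat.card H = p ^ (len p n H) := (card_len hp H).1
  have hlenC : len p n (deltaMap p n H) = n - m := by
    have h1 := card_map_pPow hp hm hΩ
    have h2 : Nat.card (H.map (pPow p n m)) = p ^ (len p n (H.map (pPow p n m))) :=
      (card_len hp _).1
    rw [h2, hcardH, ← pow_add] at h1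
    have h3 := Nat.pow_right_injective hp.two_le h1
    rw [hΔ]
    omega
  have hnm : n - len p n (deltaMap p n H) = m := by rw [hlenC]; omega
  set k := len p n (zmultiples f) with hkdef
  have hcardF : Nat.card (zmultiples f) = p ^ k := (card_len hp _).1
  have hordf : addOrderOf f = p ^ k := by rw [← Nat.card_zmultiples]; exact hcardF
  have hk1 : 1 ≤ k := k_pos hp hf hordf
  have hordf' : addOrderOf ((p : ℕ) • f) = p ^ (k - 1) := by
    have h4 := key_subC (j := 1) hp hordf hk1
    rwa [pow_one] at h4
  set lFC := len p n (zmultiples f ⊓ deltaMap p n H) with hlFCdef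
  have hlFCdef' : len p n (zmultiples f ⊓ H.map (pPow p n m)) = lFC := by rw [hlFCdef, hΔ]
  have hcardFC : Nat.card (zmultiples f ⊓ deltaMap p n H : AddSubgroup _) = p ^ lFC :=
    (card_len hp _).1
  have hlFCk : lFC ≤ k := card_inf_le hp inf_le_left hcardFC hcardF
  have hclaim1 : (k - lFC ≤ m) ↔ zmultiples f ≤ H := by
    rw [← hlFCdef']
    exact claim1 hp hm hΩ f hordf
  have hsucc : ((p : ℂ)) ^ (k - 1) * p = (p : ℂ) ^ k := by
    rw [← pow_succ, Nat.sub_add_cancel hk1]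
  refine ⟨?_, ?_, ?_, ?_⟩
  · intro hcond
    rw [hnm] at hcond
    have hFH : zmultiples f ≤ H := hclaim1.mp hcond
    have hF'H : zmultiples ((p : ℕ) • f) ≤ H :=
      le_trans (zmultiples_le_of_mem (mem_zmultiples_iff.mpr ⟨(p : ℤ), by rw [natCast_zsmul]⟩)) hFH
    rw [finsum_gen_split hp χ hf hordf,
      sum_char_subgroup_triv χ _ (fun x hx => (hker x).mpr (hFH hx)),
      sum_char_subgroup_triv χ _ (fun x hx => (hker x).mpr (hF'H hx)),
      Nat.card_zmultiples, Nat.card_zmultiples, hordf, hordf']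
    push_cast
    rw [eq_div_iff hp0]
    linear_combination (-1 : ℂ) * hsucc
  · intro hcond
    rw [hnm] at hcond
    have hinf : zmultiples f ⊓ H.map (pPow p n m) =
        zmultiples ((p : ℕ) • f) ⊓ H.map (pPow p n m) := by
      apply inf_eq_inf_of_j hp f hordf
      rw [hlFCdef']
      omega
    have hF'H : zmultiples ((p : ℕ) • f) ≤ H := by
      apply (claim1 hp hm hΩ ((p : ℕ) • f) hordf').mp
      rw [← hinf, hlFCdef']
      omega
    have hFH : ¬ zmultiples f ≤ H := by
      intro hcon
      have := hclaim1.mpr hcon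
      omega
    rw [SetLike.le_def] at hFH
    push_neg at hFH
    obtain ⟨x, hxF, hxH⟩ := hFH
    have hχx : χ x ≠ 1 := fun h => hxH ((hker x).mp h)
    rw [finsum_gen_split hp χ hf hordf,
      sum_char_subgroup_zero χ _ hxF hχx,
      sum_char_subgroup_triv χ _ (fun x hx => (hker x).mpr (hF'H hx)),
      Nat.card_zmultiples, hordf', hcardF]
    push_cast
    rw [eq_div_iff hp0]
    linear_combination (-1 : ℂ) * hsucc
  · intro hc1 hc2
    rw [hnm] at hc1 hc2
    have hFH : ¬ zmultiples f ≤ H := by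
      intro hcon
      exact hc1 (hclaim1.mpr hcon)
    have hF'H : ¬ zmultiples ((p : ℕ) • f) ≤ H := by
      intro hcon
      apply hc2
      have hinf := inf_eq_inf_of_ne (m := m) hp f hordf hFH
      have h5 := (claim1 hp hm hΩ ((p : ℕ) • f) hordf').mpr hcon
      rw [← hinf, hlFCdef'] at h5
      omega
    rw [SetLike.le_def] at hFH hF'H
    push_neg at hFH hF'H
    obtain ⟨x, hxF, hxH⟩ := hFH
    obtain ⟨x', hxF', hxH'⟩ := hF'H
    rw [finsum_gen_split hp χ hf hordf,
      sum_char_subgroup_zero χ _ hxF (fun h => hxH ((hker x).mp h)),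
      sum_char_subgroup_zero χ _ hxF' (fun h => hxH' ((hker x').mp h)),
      sub_zero]
  · have hset : {g | zmultiples g = (⊥ : AddSubgroup (ZMod (p ^ n) × ZMod (p ^ n)))} =
        {(0 : ZMod (p ^ n) × ZMod (p ^ n))} := by
      ext g
      simp only [Set.mem_setOf_eq, Set.mem_singleton_iff]
      constructor
      · intro h
        have hg : g ∈ zmultiples g := mem_zmultiples g
        rw [h] at hg
        simpa using hg
      · intro h
        rw [h, hzm0]
    rw [hset, finsum_mem_singleton, AddChar.map_zero_eq_one]
end final
end
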